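/- arXiv:0910.5897 — 9 statements merged into one kernel-verified Lean document; each statement's English description precedes it below -/
import Mathlib

section
/- For any integer n ≥ 2, any pairwise distinct positive real numbers λ_1, …, λ_n, and any nonnegative integer m, one has ∑_{k=1}^{n} (1/λ_k^m) · ∏_{l ≠ k} λ_l/(λ_l − λ_k) = ∑_{i_1 + ⋯ + i_n = m, i_j ≥ 0} 1/(λ_1^{i_1} ⋯ λ_n^{i_n}), where the right-hand sum ranges over all n-tuples of nonnegative integers summing to m. -/
/-!
Both sides are the coefficient of `X ^ m` in `∏ᵢ (1 - λᵢ⁻¹ X)⁻¹`: the right side by expanding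
the product of geometric series, the left side by its partial fraction decomposition
`∑ₖ cₖ (1 - λₖ⁻¹ X)⁻¹` with `cₖ = ∏_{l ≠ k} λₗ / (λₗ - λₖ)`. The numerator identity
`∑ₖ cₖ ∏_{l ≠ k} (1 - λₗ⁻¹ X) = 1` behind that decomposition is the fact that the Lagrange basis
at the nodes `λₖ` sums to one, since `λₗ / (λₗ - λₖ) * (1 - λₗ⁻¹ X) = (X - λₗ) / (λₖ - λₗ)`.
-/

open Finset

namespace Lagrange
open Polynomial

theorem C_div_sub_mul_one_sub_C_inv_mul_X {F : Type*} [Field F] {b : F} (hb : b ≠ 0) (a : F) :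
    C (b / (b - a)) * (1 - C b⁻¹ * X) = basisDivisor a b := by
  have h1 : b / (b - a) * b⁻¹ = -(a - b)⁻¹ := by
    rw [← inv_neg, neg_sub, div_mul_eq_mul_div, mul_inv_cancel₀ hb, one_div]
  have h2 : b / (b - a) = -((a - b)⁻¹ * b) := by
    rw [← neg_mul, ← inv_neg, neg_sub, div_eq_inv_mul]
  rw [basisDivisor, mul_sub, mul_one, ← mul_assoc, ← C_mul, h1, h2, C_neg, C_neg, C_mul]
  ring

end Lagrange

namespace PowerSeries

theorem one_sub_C_mul_X_mul_mk_pow {R : Type*} [CommRing R] (a : R) :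
    (1 - C a * X) * mk (a ^ ·) = 1 := by
  simpa [mul_comm, rescale_mk] using congrArg (rescale a) (mk_one_mul_one_sub_eq_one R)

theorem coeff_prod_eq_sum_piAntidiag {R ι : Type*} [CommSemiring R] [DecidableEq ι]
    (f : ι → R⟦X⟧) (d : ℕ) (s : Finset ι) :
    coeff d (∏ j ∈ s, f j) = ∑ l ∈ piAntidiag s d, ∏ i ∈ s, coeff (l i) (f i) := by
  rw [coeff_prod, finsuppAntidiag, sum_map]
  exact sum_attach (piAntidiag s d) (fun l => ∏ i ∈ s, coeff (l i) (f i))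

theorem coeff_prod_mk_pow {R ι : Type*} [CommSemiring R] [DecidableEq ι]
    (a : ι → R) (d : ℕ) (s : Finset ι) :
    coeff d (∏ i ∈ s, mk (a i ^ ·)) = ∑ l ∈ piAntidiag s d, ∏ i ∈ s, a i ^ l i := by
  simp [coeff_prod_eq_sum_piAntidiag]

theorem prod_mk_inv_pow_eq_sum_C_mul_mk_inv_pow {F ι : Type*} [Field F] [DecidableEq ι]
    {s : Finset ι} {v : ι → F} (hvs : Set.InjOn v s) (hs : s.Nonempty)
    (hv : ∀ i ∈ s, v i ≠ 0) :
    ∏ i ∈ s, mk ((v i)⁻¹ ^ ·) =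
      ∑ k ∈ s, C (∏ l ∈ s.erase k, v l / (v l - v k)) * mk ((v k)⁻¹ ^ ·) := by
  set P : F⟦X⟧ := ∏ i ∈ s, (1 - C (v i)⁻¹ * X) with hP
  have hprod : P * ∏ i ∈ s, mk ((v i)⁻¹ ^ ·) = 1 := by
    simp only [P, ← prod_mul_distrib, one_sub_C_mul_X_mul_mk_pow, prod_const_one]
  have hlagrange :
      ∑ k ∈ s, ∏ l ∈ s.erase k, C (v l / (v l - v k)) * (1 - C (v l)⁻¹ * X) = 1 := by
    have hbasis := congrArg (Polynomial.coeToPowerSeries.ringHom (R := F))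
      (Lagrange.sum_basis hvs hs)
    rw [map_one, map_sum] at hbasis
    refine Eq.trans (sum_congr rfl fun k _ => ?_) hbasis
    rw [Lagrange.basis, map_prod]
    refine prod_congr rfl fun l hl => ?_
    rw [← Lagrange.C_div_sub_mul_one_sub_C_inv_mul_X (hv l (mem_of_mem_erase hl))]
    simp only [map_mul, map_sub, map_one, Polynomial.coeToPowerSeries.ringHom_apply,
      Polynomial.coe_C, Polynomial.coe_X]
  have hsum : P * ∑ k ∈ s, C (∏ l ∈ s.erase k, v l / (v l - v k)) * mk ((v k)⁻¹ ^ ·) = 1 := by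
    rw [mul_sum, ← hlagrange]
    refine sum_congr rfl fun k hk => ?_
    rw [prod_mul_distrib, ← map_prod, hP, ← mul_prod_erase s (fun i => 1 - C (v i)⁻¹ * X) hk]
    linear_combination (C (∏ l ∈ s.erase k, v l / (v l - v k)) *
      ∏ l ∈ s.erase k, (1 - C (v l)⁻¹ * X)) * one_sub_C_mul_X_mul_mk_pow (v k)⁻¹
  exact mul_left_cancel₀ (left_ne_zero_of_mul_eq_one hprod) (hprod.trans hsum.symm)

end PowerSeries

/-- For pairwise distinct positive reals `λ₁, …, λₙ` (`n ≥ 2`) and any nonnegative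
integer `m`, `∑ₖ λₖ⁻ᵐ ∏_{l ≠ k} λₗ/(λₗ - λₖ)` equals the sum of
`1/(λ₁^{i₁} ⋯ λₙ^{iₙ})` over all compositions `(i₁, …, iₙ)` of `m` into `n`
nonnegative parts. -/
theorem sum_inv_pow_mul_prod_div_eq_sum_compositions
    (n : ℕ) (hn : 2 ≤ n) (lam : Fin n → ℝ)
    (hpos : ∀ k, 0 < lam k) (hdist : Function.Injective lam) (m : ℕ) :
    ∑ k : Fin n, (1 / lam k ^ m) *
        ∏ l ∈ Finset.univ.erase k, lam l / (lam l - lam k) =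
      ∑ f ∈ Finset.Nat.antidiagonalTuple n m, ∏ i : Fin n, 1 / lam i ^ f i := by
  have hne : (univ : Finset (Fin n)).Nonempty := univ_nonempty_iff.2 ⟨⟨0, by omega⟩⟩
  have hcoeff := congrArg (PowerSeries.coeff m) <|
    PowerSeries.prod_mk_inv_pow_eq_sum_C_mul_mk_inv_pow hdist.injOn hne fun i _ => (hpos i).ne'
  simp only [PowerSeries.coeff_prod_mk_pow, piAntidiag_univ_fin_eq_antidiagonalTuple, map_sum,
    PowerSeries.coeff_C_mul, PowerSeries.coeff_mk] at hcoeff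
  simp only [one_div, ← inv_pow, hcoeff, mul_comm]
end

section
/- Good's identity: for any integer n ≥ 2 and any pairwise distinct nonzero real numbers x_1, …, x_n, one has ∑_{j=1}^{n} ∏_{i ≠ j} (1 − x_j/x_i)^{-1} = 1. -/
/-!
The identity is `∑ⱼ Lⱼ(0) = 1` for the Lagrange basis `Lⱼ` at the nodes `xⱼ`, since
`∑ⱼ Lⱼ = 1` and `Lⱼ(0) = ∏_{i ≠ j} (0 - xᵢ)/(xⱼ - xᵢ) = ∏_{i ≠ j} (1 - xⱼ/xᵢ)⁻¹`.
-/

open Finset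

theorem Lagrange.eval_zero_basisDivisor {F : Type*} [Field F] {a b : F} (hab : a ≠ b)
    (hb : b ≠ 0) : (Lagrange.basisDivisor a b).eval 0 = (1 - a / b)⁻¹ := by
  rw [Lagrange.basisDivisor, Polynomial.eval_mul, Polynomial.eval_C, Polynomial.eval_sub,
    Polynomial.eval_X, Polynomial.eval_C, one_sub_div hb, inv_div]
  field_simp [sub_ne_zero.mpr hab, sub_ne_zero.mpr hab.symm]
  ring

theorem Lagrange.eval_zero_basis {F ι : Type*} [Field F] [DecidableEq ι] {s : Finset ι}
    {v : ι → F} (hvs : Set.InjOn v s) (hv : ∀ i ∈ s, v i ≠ 0) {j : ι} (hj : j ∈ s) :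
    (Lagrange.basis s v j).eval 0 = ∏ i ∈ s.erase j, (1 - v j / v i)⁻¹ := by
  rw [Lagrange.basis, Polynomial.eval_prod]
  refine prod_congr rfl fun i hi => ?_
  obtain ⟨hij, his⟩ := mem_erase.mp hi
  exact Lagrange.eval_zero_basisDivisor (fun h => hij (hvs his hj h.symm)) (hv i his)

theorem sum_prod_inv_one_sub_div_eq_one {F ι : Type*} [Field F] [DecidableEq ι]
    {s : Finset ι} (hs : s.Nonempty) {v : ι → F} (hvs : Set.InjOn v s)
    (hv : ∀ i ∈ s, v i ≠ 0) :
    ∑ j ∈ s, ∏ i ∈ s.erase j, (1 - v j / v i)⁻¹ = 1 := by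
  have h := congrArg (Polynomial.eval 0) (Lagrange.sum_basis hvs hs)
  rwa [Polynomial.eval_finsetSum, Polynomial.eval_one,
    sum_congr rfl fun j hj => Lagrange.eval_zero_basis hvs hv hj] at h

/-- Good's identity: for pairwise distinct nonzero reals `x₁, …, xₙ` (`n ≥ 2`),
`∑ⱼ ∏_{i ≠ j} (1 - xⱼ/xᵢ)⁻¹ = 1`. -/
theorem good_identity (n : ℕ) (hn : 2 ≤ n) (x : Fin n → ℝ)
    (hx : ∀ i, x i ≠ 0) (hdist : Function.Injective x) :
    ∑ j : Fin n, ∏ i ∈ Finset.univ.erase j, (1 - x j / x i)⁻¹ = 1 :=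
  sum_prod_inv_one_sub_div_eq_one (univ_nonempty_iff.mpr (Fin.pos_iff_nonempty.mp (by omega)))
    hdist.injOn fun i _ => hx i
end

section
/- Let n ≥ 2 and let X_1, …, X_n be independent real-valued random variables on a probability space, where X_j is exponentially distributed with rate λ_j (density λ_j e^{−λ_j x} for x ≥ 0, and 0 for x < 0), and the λ_j are pairwise distinct positive reals. Then the distribution of S_n = X_1 + ⋯ + X_n has density with respect to Lebesgue measure given by f_n(x) = (∏_{j=1}^{n} λ_j) · ∑_{k=1}^{n} e^{−λ_k x}/∏_{l ≠ k} (λ_l − λ_k) for x ≥ 0, and f_n(x) = 0 for x < 0. -/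
/-!
The law of a sum of independent variables is the convolution of their laws, so one inducts on
the index set, convolving the density `(∏ λ) ∑ₖ e^{-λₖ t} / ∏_{l ≠ k} (λₗ - λₖ)` with
`λₐ e^{-λₐ t}`. Each exponential integrates explicitly over `[0, x]`, and the coefficient of the
new exponential `e^{-λₐ x}` is the partial fraction identity
`∑ₖ 1 / ((λₖ - c) ∏_{l ≠ k} (λₗ - λₖ)) = 1 / ∏ₗ (λₗ - c)`,
which is Lagrange interpolation of the constant `1` evaluated at `c`.
-/

open Finset MeasureTheory ProbabilityTheory
open scoped ENNReal

namespace Lagrange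

theorem sum_nodalWeight_mul_inv_sub {F ι : Type*} [Field F] [DecidableEq ι] {s : Finset ι}
    {v : ι → F} {x : F} (hvs : Set.InjOn v s) (hs : s.Nonempty) (hx : ∀ i ∈ s, x ≠ v i) :
    ∑ i ∈ s, nodalWeight s v i * (x - v i)⁻¹ = (∏ i ∈ s, (x - v i))⁻¹ := by
  have h := eval_interpolate_not_at_node 1 hx
  simp only [interpolate_one hvs hs, Polynomial.eval_one, Pi.one_apply, mul_one,
    eval_nodal] at h
  exact (eq_inv_of_mul_eq_one_right h.symm)

end Lagrange

theorem sum_inv_mul_prod_erase_sub {F ι : Type*} [Field F] [DecidableEq ι] {s : Finset ι}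
    {v : ι → F} {c : F} (hvs : Set.InjOn v s) (hs : s.Nonempty) (hc : ∀ k ∈ s, v k ≠ c) :
    ∑ k ∈ s, ((v k - c) * ∏ l ∈ s.erase k, (v l - v k))⁻¹ = (∏ l ∈ s, (v l - c))⁻¹ := by
  -- Interpolation at the nodes `-v`, evaluated at `-c`.
  have hweight : ∀ k, Lagrange.nodalWeight s (-v) k = (∏ l ∈ s.erase k, (v l - v k))⁻¹ :=
    fun k => by simp [Lagrange.nodalWeight, prod_inv_distrib, neg_add_eq_sub]
  have h := Lagrange.sum_nodalWeight_mul_inv_sub (v := -v) (x := -c)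
    (fun i hi j hj h => hvs hi hj (neg_inj.mp h)) hs fun k hk => by simpa [eq_comm] using hc k hk
  simp only [hweight, Pi.neg_apply, neg_sub_neg] at h
  rw [← h]
  exact sum_congr rfl fun k _ => by rw [mul_inv, mul_comm]

theorem integral_exp_mul_exp_sub {a c : ℝ} (hac : a ≠ c) (x : ℝ) :
    ∫ t in 0..x, Real.exp (-(a * t)) * Real.exp (-(c * (x - t))) =
      (Real.exp (-(a * x)) - Real.exp (-(c * x))) / (c - a) := by
  have hca : c - a ≠ 0 := sub_ne_zero.mpr hac.symm
  have h : ∀ t, Real.exp (-(a * t)) * Real.exp (-(c * (x - t))) =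
      Real.exp (-(c * x)) * Real.exp ((c - a) * t) := fun t => by
    rw [← Real.exp_add, ← Real.exp_add]; ring_nf
  simp_rw [h, intervalIntegral.integral_const_mul,
    intervalIntegral.integral_comp_mul_left (fun t => Real.exp t) hca, integral_exp]
  have hx : Real.exp (-(c * x)) * Real.exp ((c - a) * x) = Real.exp (-(a * x)) := by
    rw [← Real.exp_add]; ring_nf
  rw [smul_eq_mul, mul_zero, Real.exp_zero, mul_left_comm, mul_sub, hx, mul_one, inv_mul_eq_div]

theorem lconvolution_ofReal_ite_nonneg {f g : ℝ → ℝ} (hf : Continuous f) (hg : Continuous g)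
    (hf₀ : ∀ t, 0 ≤ t → 0 ≤ f t) (hg₀ : ∀ t, 0 ≤ t → 0 ≤ g t) (x : ℝ) :
    ((fun t => ENNReal.ofReal (if 0 ≤ t then f t else 0)) ⋆ₗ
        fun t => ENNReal.ofReal (if 0 ≤ t then g t else 0)) x =
      ENNReal.ofReal (if 0 ≤ x then ∫ t in 0..x, f t * g (x - t) else 0) := by
  have hsupp : ∀ t, ENNReal.ofReal (if 0 ≤ t then f t else 0) *
      ENNReal.ofReal (if 0 ≤ -t + x then g (-t + x) else 0) =
        (Set.Icc 0 x).indicator (fun t => ENNReal.ofReal (f t * g (x - t))) t := by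
    intro t
    simp only [Set.indicator_apply, Set.mem_Icc, neg_add_eq_sub, sub_nonneg]
    by_cases h₀ : 0 ≤ t
    · by_cases h₁ : t ≤ x
      · rw [if_pos h₀, if_pos h₁, if_pos ⟨h₀, h₁⟩, ENNReal.ofReal_mul (hf₀ t h₀)]
      · simp [h₁]
    · simp [h₀]
  rw [lconvolution_def, lintegral_congr hsupp, lintegral_indicator measurableSet_Icc]
  rcases le_or_gt 0 x with hx | hx
  · rw [if_pos hx, ← ofReal_integral_eq_lintegral_ofReal, integral_Icc_eq_integral_Ioc,
      ← intervalIntegral.integral_of_le hx]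
    · exact (by fun_prop : Continuous fun t => f t * g (x - t)).integrableOn_Icc
    · exact (ae_restrict_iff' measurableSet_Icc).mpr <| Filter.Eventually.of_forall fun t ht =>
        mul_nonneg (hf₀ t ht.1) (hg₀ _ (sub_nonneg.mpr ht.2))
  · rw [if_neg hx.not_ge, Set.Icc_eq_empty hx.not_ge, Measure.restrict_empty,
      lintegral_zero_measure, ENNReal.ofReal_zero]

section Hypoexponential

variable {ι : Type*} [DecidableEq ι]

noncomputable def hypoexpSum (s : Finset ι) (lam : ι → ℝ) (x : ℝ) : ℝ :=
  ∑ k ∈ s, Real.exp (-(lam k * x)) / ∏ l ∈ s.erase k, (lam l - lam k)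

noncomputable def hypoexpPDF (s : Finset ι) (lam : ι → ℝ) (x : ℝ) : ℝ≥0∞ :=
  ENNReal.ofReal (if 0 ≤ x then (∏ j ∈ s, lam j) * hypoexpSum s lam x else 0)

variable {s : Finset ι} {lam : ι → ℝ} {a : ι}

@[fun_prop]
theorem continuous_hypoexpSum (s : Finset ι) (lam : ι → ℝ) : Continuous (hypoexpSum s lam) := by
  unfold hypoexpSum; fun_prop

theorem measurable_hypoexpPDF (s : Finset ι) (lam : ι → ℝ) : Measurable (hypoexpPDF s lam) := by
  unfold hypoexpPDF
  exact (Measurable.ite measurableSet_Ici (by fun_prop) measurable_const).ennreal_ofReal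

theorem hypoexpSum_singleton (a : ι) (lam : ι → ℝ) (x : ℝ) :
    hypoexpSum {a} lam x = Real.exp (-(lam a * x)) := by
  simp [hypoexpSum]

theorem hypoexpSum_insert (ha : a ∉ s) (x : ℝ) :
    hypoexpSum (insert a s) lam x =
      ∑ k ∈ s, Real.exp (-(lam k * x)) / ((lam a - lam k) * ∏ l ∈ s.erase k, (lam l - lam k)) +
        Real.exp (-(lam a * x)) / ∏ l ∈ s, (lam l - lam a) := by
  rw [hypoexpSum, sum_insert ha, erase_insert ha, add_comm]
  congr 1
  refine sum_congr rfl fun k hk => ?_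
  have hka : k ≠ a := ne_of_mem_of_not_mem hk ha
  rw [erase_insert_of_ne hka.symm, prod_insert fun h => ha (mem_of_mem_erase h)]

theorem integral_hypoexpSum_mul_exp (hs : s.Nonempty) (ha : a ∉ s)
    (hinj : Set.InjOn lam (insert a s : Finset ι)) (x : ℝ) :
    ∫ t in 0..x, hypoexpSum s lam t * Real.exp (-(lam a * (x - t))) =
      hypoexpSum (insert a s) lam x := by
  have hne : ∀ k ∈ s, lam k ≠ lam a := fun k hk h =>
    ne_of_mem_of_not_mem hk ha (hinj (mem_insert_of_mem hk) (mem_insert_self a s) h)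
  have hterm : ∀ k ∈ s,
      ∫ t in 0..x, (Real.exp (-(lam k * t)) / ∏ l ∈ s.erase k, (lam l - lam k)) *
        Real.exp (-(lam a * (x - t))) =
      Real.exp (-(lam k * x)) / ((lam a - lam k) * ∏ l ∈ s.erase k, (lam l - lam k)) +
        Real.exp (-(lam a * x)) * ((lam k - lam a) * ∏ l ∈ s.erase k, (lam l - lam k))⁻¹ := by
    intro k hk
    simp_rw [div_mul_eq_mul_div]
    rw [intervalIntegral.integral_div, integral_exp_mul_exp_sub (hne k hk),
      ← neg_sub (lam a) (lam k), neg_mul, inv_neg]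
    simp only [div_eq_mul_inv, mul_inv]
    ring
  rw [hypoexpSum_insert ha]
  simp_rw [hypoexpSum, sum_mul]
  rw [intervalIntegral.integral_finsetSum fun k _ =>
      (Continuous.intervalIntegrable (by fun_prop) _ _),
    sum_congr rfl hterm, sum_add_distrib, ← mul_sum,
    sum_inv_mul_prod_erase_sub (hinj.mono (by simp)) hs hne, div_eq_mul_inv]

theorem hypoexpSum_nonneg (hs : s.Nonempty) (hinj : Set.InjOn lam s) {x : ℝ} (hx : 0 ≤ x) :
    0 ≤ hypoexpSum s lam x := by
  induction hs using Finset.Nonempty.cons_induction generalizing x with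
  | singleton a => rw [hypoexpSum_singleton]; positivity
  | cons a s ha hs ih =>
    -- The terms have mixed signs; positivity comes from the convolution representation.
    rw [cons_eq_insert] at hinj ⊢
    rw [← integral_hypoexpSum_mul_exp hs ha hinj]
    exact intervalIntegral.integral_nonneg hx fun t ht =>
      mul_nonneg (ih (hinj.mono (by simp)) ht.1) (Real.exp_nonneg _)

theorem hypoexpPDF_singleton (a : ι) (lam : ι → ℝ) :
    hypoexpPDF {a} lam = exponentialPDF (lam a) := by
  ext x
  rw [hypoexpPDF, exponentialPDF_eq, prod_singleton, hypoexpSum_singleton]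

theorem hypoexpPDF_lconvolution_exponentialPDF (hs : s.Nonempty) (ha : a ∉ s)
    (hinj : Set.InjOn lam (insert a s : Finset ι)) (hlam : ∀ j ∈ insert a s, 0 ≤ lam j) :
    hypoexpPDF s lam ⋆ₗ exponentialPDF (lam a) = hypoexpPDF (insert a s) lam := by
  ext x
  have hP : 0 ≤ ∏ j ∈ s, lam j := prod_nonneg fun j hj => hlam j (mem_insert_of_mem hj)
  have ha₀ : 0 ≤ lam a := hlam a (mem_insert_self a s)
  rw [funext (exponentialPDF_eq (lam a))]
  refine (lconvolution_ofReal_ite_nonneg (f := fun t => (∏ j ∈ s, lam j) * hypoexpSum s lam t)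
      (by fun_prop) (by fun_prop)
      (fun t ht => mul_nonneg hP (hypoexpSum_nonneg hs (hinj.mono (by simp)) ht))
      (fun t _ => mul_nonneg ha₀ (Real.exp_nonneg _)) x).trans ?_
  rw [hypoexpPDF, prod_insert ha, ← integral_hypoexpSum_mul_exp hs ha hinj]
  simp_rw [← intervalIntegral.integral_const_mul]
  congr 2
  refine intervalIntegral.integral_congr fun t _ => ?_
  ring

theorem map_sum_eq_withDensity_hypoexpPDF {Ω : Type*} [MeasurableSpace Ω] {μ : Measure Ω}
    [IsFiniteMeasure μ] {X : ι → Ω → ℝ} (hmeas : ∀ j, Measurable (X j))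
    (hindep : iIndepFun X μ) (hlam : ∀ j, 0 ≤ lam j)
    (hlaw : ∀ j, μ.map (X j) = volume.withDensity (exponentialPDF (lam j)))
    (hs : s.Nonempty) (hinj : Set.InjOn lam s) :
    μ.map (∑ j ∈ s, X j) = volume.withDensity (hypoexpPDF s lam) := by
  induction hs using Finset.Nonempty.cons_induction with
  | singleton a => rw [sum_singleton, hlaw a, hypoexpPDF_singleton]
  | cons a s ha hs ih =>
    rw [cons_eq_insert] at hinj ⊢
    rw [sum_insert ha, add_comm,
      (hindep.indepFun_finsetSum_of_notMem hmeas ha).map_add_eq_map_conv_map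
        (by fun_prop) (hmeas a),
      ih (hinj.mono (by simp)), hlaw a,
      conv_withDensity_eq_lconvolution (g := exponentialPDF (lam a))
        (measurable_hypoexpPDF s lam) (measurable_exponentialPDFReal _).ennreal_ofReal,
      hypoexpPDF_lconvolution_exponentialPDF hs ha hinj fun j _ => hlam j]

end Hypoexponential

/-- If `X₁, …, Xₙ` (`n ≥ 2`) are independent exponential random variables with
pairwise distinct rates `λ₁, …, λₙ > 0` (i.e. `Xⱼ` has density
`λⱼ e^{-λⱼ x}` for `x ≥ 0` and `0` for `x < 0`), then `Sₙ = X₁ + ⋯ + Xₙ` has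
density `fₙ(x) = (∏ⱼ λⱼ) ∑ₖ e^{-λₖ x} / ∏_{l ≠ k} (λₗ - λₖ)` for `x ≥ 0`
and `0` for `x < 0`. -/
theorem sum_indep_exponential_density
    {Ω : Type*} [MeasurableSpace Ω] (μ : Measure Ω) [IsProbabilityMeasure μ]
    (n : ℕ) (hn : 2 ≤ n) (lam : Fin n → ℝ)
    (hpos : ∀ j, 0 < lam j) (hdist : Function.Injective lam)
    (X : Fin n → Ω → ℝ) (hmeas : ∀ j, Measurable (X j))
    (hindep : iIndepFun X μ)
    (hlaw : ∀ j, Measure.map (X j) μ =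
      volume.withDensity fun x =>
        ENNReal.ofReal (if 0 ≤ x then lam j * Real.exp (-(lam j * x)) else 0)) :
    Measure.map (fun ω => ∑ j : Fin n, X j ω) μ =
      volume.withDensity fun x =>
        ENNReal.ofReal (if 0 ≤ x then
          (∏ j : Fin n, lam j) *
            ∑ k : Fin n, Real.exp (-(lam k * x)) /
              ∏ l ∈ Finset.univ.erase k, (lam l - lam k)
        else 0) := by
  have hne : (univ : Finset (Fin n)).Nonempty := univ_nonempty_iff.mpr ⟨⟨0, by omega⟩⟩
  have hlaw' : ∀ j, μ.map (X j) = volume.withDensity (exponentialPDF (lam j)) := fun j =>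
    (hlaw j).trans (congrArg _ (funext fun x => (exponentialPDF_eq _ x).symm))
  rw [← Finset.sum_fn]
  exact map_sum_eq_withDensity_hypoexpPDF hmeas hindep (fun j => (hpos j).le) hlaw' hne
    hdist.injOn
end

section
/- Let n ≥ 2, α_i > 0, β_i > 0 for 1 ≤ i ≤ n, with β_1 = min_{1≤i≤n} β_i. Set A = ∑_{i=1}^{n} α_i, γ_l = (1/l) ∑_{i=1}^{n} α_i (1 − β_1/β_i)^l for l ≥ 1, and define δ_0 = 1, δ_{j+1} = (1/(j+1)) ∑_{l=1}^{j+1} l γ_l δ_{j+1−l} for j ≥ 0. Then ∏_{i=1}^{n} (β_1/β_i)^{α_i} · β_1 · ∑_{j=0}^{∞} δ_j (A + j) = ∑_{i=1}^{n} α_i β_i, the series on the left converging. -/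
/-!
Put `x_i = 1 - β₁/β_i ∈ [0, 1)` and `D(t) = ∑ δ_j t^j`. Since `l γ_l = ∑ α_i x_i^l`, the
recurrence says `t D' = (∑ α_i x_i t / (1 - x_i t)) D`; the product `∏ (1 - x_i t)^(-α_i)`
satisfies the same first-order equation with the same constant term, so it equals `D`. Hence
`∑ (A + j) δ_j t^j = t D' + A D = (∑ α_i / (1 - x_i t)) D`. As every `x_i < 1`, all these
series converge absolutely at `t = 1`, and Cauchy products evaluate the sum there as
`(∑ α_i β_i / β₁) ∏ (β₁/β_i)^(-α_i)`.
-/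

open Finset Real PowerSeries

theorem Ring.succ_nsmul_choose_succ {R : Type*} [CommRing R] [BinomialRing R] (r : R) (n : ℕ) :
    (n + 1) • Ring.choose r (n + 1) = r * Ring.choose (r - 1) n := by
  simpa [Ring.choose_one_right] using Ring.choose_smul_choose r (n := n + 1) (k := 1) (by omega)

theorem Derivation.apply_prod_eq_sum_mul_prod {R A ι : Type*} [CommSemiring R] [CommRing A]
    [Algebra R A] (D : Derivation R A A) {s : Finset ι} {f q : ι → A}
    (h : ∀ i ∈ s, D (f i) = q i * f i) :
    D (∏ i ∈ s, f i) = (∑ i ∈ s, q i) * ∏ i ∈ s, f i := by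
  classical
  induction s using Finset.induction_on with
  | empty => simp
  | insert i s hi ih =>
    rw [prod_insert hi, sum_insert hi, D.leibniz, ih fun j hj => h j (mem_insert_of_mem hj),
      h i (mem_insert_self i s), smul_eq_mul, smul_eq_mul]
    ring

namespace PowerSeries

section CommRing

variable {R : Type*} [CommRing R]

theorem coeff_X_smul_derivative (f : R⟦X⟧) (n : ℕ) :
    coeff n (((X : R⟦X⟧) • d⁄dX R) f) = n * coeff n f := by
  rcases n with _ | n
  · simp
  · rw [Derivation.smul_apply, smul_eq_mul, coeff_succ_X_mul, coeff_derivative]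
    push_cast
    ring

theorem X_smul_derivative_mk_of_recurrence {p c : ℕ → R}
    (hc : ∀ j : ℕ, ((j : R) + 1) * c (j + 1) = ∑ l ∈ Icc 1 (j + 1), p l * c (j + 1 - l)) :
    ((X : R⟦X⟧) • d⁄dX R) (mk c) = (mk p - C (p 0)) * mk c := by
  have hp : mk p - C (p 0) = X * mk fun l => p (l + 1) := by
    ext (_ | l) <;> simp [coeff_succ_X_mul]
  ext (_ | j)
  · simp [hp]
  · rw [coeff_X_smul_derivative, hp, mul_assoc, coeff_succ_X_mul, coeff_mul,
      Nat.sum_antidiagonal_eq_sum_range_succ_mk, coeff_mk, Nat.cast_succ, hc j,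
      ← Ico_add_one_right_eq_Icc, sum_Ico_eq_sum_range]
    refine sum_congr rfl fun k _ => ?_
    simp [add_comm 1 k, Nat.succ_sub_succ]

/-- At the order `d` of the difference `h = f - g`, the coefficient of `X h'` is `d h_d ≠ 0`,
while `q h` vanishes to order at least `d + 1`. -/
theorem eq_of_X_smul_derivative_eq_mul [IsDomain R] [CharZero R] {f g q : R⟦X⟧}
    (hq : constantCoeff q = 0) (h0 : constantCoeff f = constantCoeff g)
    (hf : ((X : R⟦X⟧) • d⁄dX R) f = q * f) (hg : ((X : R⟦X⟧) • d⁄dX R) g = q * g) :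
    f = g := by
  rw [← sub_eq_zero]
  set h := f - g
  have hh : ((X : R⟦X⟧) • d⁄dX R) h = q * h := by rw [map_sub, hf, hg, mul_sub]
  by_contra hne
  set d := h.order.toNat
  have hd : (d : ℕ∞) = h.order := coe_toNat_order hne
  have hd0 : d ≠ 0 := by
    have : (1 : ℕ∞) ≤ d := hd ▸ one_le_order_iff_constCoeff_eq_zero.2 (by simp [h, h0])
    exact Nat.one_le_iff_ne_zero.1 (by exact_mod_cast this)
  have hlt : (d : ℕ∞) < (q * h).order :=
    calc (d : ℕ∞) < 1 + d := by norm_cast; omega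
      _ ≤ q.order + h.order := by
          rw [← hd]; gcongr; exact one_le_order_iff_constCoeff_eq_zero.2 hq
      _ ≤ (q * h).order := le_order_mul q h
  have hcoeff := coeff_X_smul_derivative h d
  rw [hh, coeff_of_lt_order d hlt] at hcoeff
  exact mul_ne_zero (Nat.cast_ne_zero.2 hd0) (coeff_order hne) hcoeff.symm

noncomputable def geomSeries (x : R) : R⟦X⟧ := mk (x ^ ·)

theorem mk_sum_mul_pow {ι : Type*} (s : Finset ι) (α x : ι → R) :
    mk (fun l => ∑ i ∈ s, α i * x i ^ l) = ∑ i ∈ s, C (α i) * geomSeries (x i) := by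
  ext
  simp [geomSeries, map_sum, coeff_C_mul]

theorem one_sub_C_mul_X_mul_geomSeries (x : R) : (1 - C x * X) * geomSeries x = 1 := by
  ext (_ | n)
  · simp [geomSeries]
  · simp [geomSeries, sub_mul, mul_assoc, coeff_succ_X_mul, pow_succ']

end CommRing

section NormedRing

variable {R : Type*} [NormedRing R]

theorem summable_norm_coeff_mul {f g : R⟦X⟧} (hf : Summable fun n => ‖coeff n f‖)
    (hg : Summable fun n => ‖coeff n g‖) : Summable fun n => ‖coeff n (f * g)‖ := by
  simpa only [coeff_mul] using summable_norm_sum_mul_antidiagonal_of_summable_norm hf hg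

theorem hasSum_coeff_mul [CompleteSpace R] {f g : R⟦X⟧} {a b : R}
    (hf : Summable fun n => ‖coeff n f‖) (hg : Summable fun n => ‖coeff n g‖)
    (ha : HasSum (fun n => coeff n f) a) (hb : HasSum (fun n => coeff n g) b) :
    HasSum (fun n => coeff n (f * g)) (a * b) := by
  rw [← ha.tsum_eq, ← hb.tsum_eq, tsum_mul_tsum_eq_tsum_sum_antidiagonal_of_summable_norm hf hg]
  simpa only [coeff_mul] using (summable_norm_coeff_mul hf hg).of_norm.hasSum

end NormedRing

section NormedCommRing

variable {R : Type*} [NormedCommRing R]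

theorem summable_norm_coeff_prod {ι : Type*} {s : Finset ι} {f : ι → R⟦X⟧}
    (hf : ∀ i ∈ s, Summable fun n => ‖coeff n (f i)‖) :
    Summable fun n => ‖coeff n (∏ i ∈ s, f i)‖ := by
  classical
  induction s using Finset.induction_on with
  | empty =>
    refine summable_of_ne_finset_zero (s := {0}) fun n hn => ?_
    simp_all [coeff_one]
  | insert i s hi ih =>
    rw [prod_insert hi]
    exact summable_norm_coeff_mul (hf i (mem_insert_self i s))
      (ih fun j hj => hf j (mem_insert_of_mem hj))

theorem hasSum_coeff_prod [CompleteSpace R] {ι : Type*} {s : Finset ι} {f : ι → R⟦X⟧}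
    {a : ι → R} (hf : ∀ i ∈ s, Summable fun n => ‖coeff n (f i)‖)
    (ha : ∀ i ∈ s, HasSum (fun n => coeff n (f i)) (a i)) :
    HasSum (fun n => coeff n (∏ i ∈ s, f i)) (∏ i ∈ s, a i) := by
  classical
  induction s using Finset.induction_on with
  | empty => simpa [coeff_one] using hasSum_ite_eq 0 (1 : R)
  | insert i s hi ih =>
    have hfs : ∀ j ∈ s, Summable fun n => ‖coeff n (f j)‖ :=
      fun j hj => hf j (mem_insert_of_mem hj)
    rw [prod_insert hi, prod_insert hi]
    exact hasSum_coeff_mul (hf i (mem_insert_self i s)) (summable_norm_coeff_prod hfs)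
      (ha i (mem_insert_self i s)) (ih hfs fun j hj => ha j (mem_insert_of_mem hj))

end NormedCommRing

section Geometric

variable {K : Type*} [NormedField K] {x : K}

theorem summable_norm_coeff_geomSeries (hx : ‖x‖ < 1) :
    Summable fun n => ‖coeff n (geomSeries x)‖ := by
  simpa [geomSeries] using summable_geometric_of_lt_one (norm_nonneg x) hx

theorem hasSum_coeff_geomSeries [CompleteSpace K] (hx : ‖x‖ < 1) :
    HasSum (fun n => coeff n (geomSeries x)) (1 - x)⁻¹ := by
  simpa [geomSeries] using hasSum_geometric_of_norm_lt_one hx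

end Geometric

/-- The Taylor series at `0` of `t ↦ (1 - x t) ^ (-a)`. -/
noncomputable def negBinomialSeries (a x : ℝ) : ℝ⟦X⟧ :=
  mk fun n => Ring.choose (a + n - 1) n * x ^ n

@[simp]
theorem constantCoeff_negBinomialSeries (a x : ℝ) : constantCoeff (negBinomialSeries a x) = 1 := by
  simp [negBinomialSeries, ← coeff_zero_eq_constantCoeff_apply]

theorem hasSum_coeff_negBinomialSeries (a : ℝ) {x : ℝ} (hx : ‖x‖ < 1) :
    HasSum (fun n => coeff n (negBinomialSeries a x)) ((1 - x) ^ a)⁻¹ := by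
  have h := (one_div_one_sub_rpow_hasFPowerSeriesOnBall_zero a).hasSum (y := x)
    (by simpa [enorm_eq_nnnorm, ← NNReal.coe_lt_coe] using hx)
  simpa [negBinomialSeries, FormalMultilinearSeries.ofScalars_apply_eq, mul_comm] using h

theorem summable_norm_coeff_negBinomialSeries (a : ℝ) {x : ℝ} (hx : ‖x‖ < 1) :
    Summable fun n => ‖coeff n (negBinomialSeries a x)‖ := by
  have h := one_div_one_sub_rpow_hasFPowerSeriesOnBall_zero a
  have hsum := FormalMultilinearSeries.summable_norm_apply _ (x := x)
    (Metric.eball_subset_eball h.r_le (by simpa [enorm_eq_nnnorm, ← NNReal.coe_lt_coe] using hx))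
  simpa [negBinomialSeries, FormalMultilinearSeries.ofScalars_apply_eq, mul_comm] using hsum

/-- Multiplying by the unit `1 - x X` turns the claim into the recurrence
`(n + 1) c_{n+1} = (a + n) c_n` of the coefficients. -/
theorem X_smul_derivative_negBinomialSeries (a x : ℝ) :
    ((X : ℝ⟦X⟧) • d⁄dX ℝ) (negBinomialSeries a x) =
      C a * (geomSeries x - 1) * negBinomialSeries a x := by
  have hG := one_sub_C_mul_X_mul_geomSeries x
  refine mul_left_cancel₀ (left_ne_zero_of_mul_eq_one hG) ?_
  rw [show (1 - C x * X) * (C a * (geomSeries x - 1) * negBinomialSeries a x) =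
      C a * (C x * X) * negBinomialSeries a x by
    linear_combination C a * negBinomialSeries a x * hG]
  ext (_ | n)
  · simp
  · simp only [sub_mul, one_mul, mul_assoc, map_sub, coeff_C_mul, coeff_succ_X_mul,
      coeff_X_smul_derivative, negBinomialSeries, coeff_mk]
    push_cast
    have h := Ring.succ_nsmul_choose_succ (a + n) n
    rw [nsmul_eq_mul] at h
    push_cast at h
    rw [← add_assoc, add_sub_cancel_right]
    linear_combination x ^ (n + 1) * h

section Recurrence

variable {ι : Type*} [Fintype ι] (α x : ι → ℝ) {c : ℕ → ℝ}

theorem mk_eq_prod_negBinomialSeries (hc0 : c 0 = 1)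
    (hc : ∀ j : ℕ, ((j : ℝ) + 1) * c (j + 1) =
      ∑ l ∈ Icc 1 (j + 1), (∑ i, α i * x i ^ l) * c (j + 1 - l)) :
    mk c = ∏ i, negBinomialSeries (α i) (x i) := by
  refine eq_of_X_smul_derivative_eq_mul (by simp) (by simp [map_prod, hc0])
    (X_smul_derivative_mk_of_recurrence hc) ?_
  rw [Derivation.apply_prod_eq_sum_mul_prod _ fun i _ => X_smul_derivative_negBinomialSeries _ _,
    mk_sum_mul_pow]
  simp [mul_sub, sum_sub_distrib, map_sum]

theorem hasSum_mul_add_of_recurrence (hx : ∀ i, ‖x i‖ < 1) (hc0 : c 0 = 1)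
    (hc : ∀ j : ℕ, ((j : ℝ) + 1) * c (j + 1) =
      ∑ l ∈ Icc 1 (j + 1), (∑ i, α i * x i ^ l) * c (j + 1 - l)) :
    HasSum (fun j => c j * (∑ i, α i + j))
      (∑ i, α i * ((1 - x i)⁻¹ * ∏ k, ((1 - x k) ^ α k)⁻¹)) := by
  set F := ∏ i, negBinomialSeries (α i) (x i)
  have hcF : mk c = F := mk_eq_prod_negBinomialSeries α x hc0 hc
  have hterm : ∀ j, c j * (∑ i, α i + j) = ∑ i, α i * coeff j (geomSeries (x i) * F) := by
    intro j
    have h := congrArg (coeff j) (X_smul_derivative_mk_of_recurrence hc)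
    rw [coeff_X_smul_derivative, sub_mul, map_sub, coeff_C_mul, coeff_mk, mk_sum_mul_pow, hcF] at h
    simp only [pow_zero, mul_one] at h
    rw [sum_mul univ (fun i => C (α i) * geomSeries (x i)), map_sum] at h
    simp only [mul_assoc, coeff_C_mul] at h
    linarith
  have hG := fun i => summable_norm_coeff_geomSeries (hx i)
  have hGsum := fun i => hasSum_coeff_geomSeries (hx i)
  have hFs : Summable fun j => ‖coeff j F‖ :=
    summable_norm_coeff_prod fun i _ => summable_norm_coeff_negBinomialSeries _ (hx i)
  have hF : HasSum (fun j => coeff j F) (∏ i, ((1 - x i) ^ α i)⁻¹) :=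
    hasSum_coeff_prod (fun i _ => summable_norm_coeff_negBinomialSeries _ (hx i))
      (fun i _ => hasSum_coeff_negBinomialSeries _ (hx i))
  simp only [hterm]
  exact hasSum_sum fun i _ => (hasSum_coeff_mul (hG i) hFs (hGsum i) hF).mul_left (α i)

end Recurrence

end PowerSeries

/-- For `n ≥ 2`, `αᵢ > 0`, `βᵢ > 0` with `β₁ = min βᵢ`, setting `A = ∑ αᵢ`,
`γₗ = (1/l) ∑ᵢ αᵢ (1 - β₁/βᵢ)^l`, `δ₀ = 1` and
`δ_{j+1} = (1/(j+1)) ∑_{l=1}^{j+1} l γₗ δ_{j+1-l}`, the series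
`∑ⱼ δⱼ (A + j)` converges and
`∏ᵢ (β₁/βᵢ)^{αᵢ} · β₁ · ∑_{j=0}^∞ δⱼ (A + j) = ∑ᵢ αᵢ βᵢ`. -/
theorem gamma_sum_mean_identity
    (n : ℕ) (hn : 2 ≤ n) (α β : Fin n → ℝ)
    (hβ : ∀ i, 0 < β i)
    (β1 : ℝ) (hβ1 : β1 = β ⟨0, by omega⟩) (hmin : ∀ i, β1 ≤ β i)
    (A : ℝ) (hA : A = ∑ i : Fin n, α i)
    (γ δ : ℕ → ℝ)
    (hγ : ∀ l : ℕ, 1 ≤ l →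
      γ l = (∑ i : Fin n, α i * (1 - β1 / β i) ^ l) / l)
    (hδ0 : δ 0 = 1)
    (hδ : ∀ j : ℕ, δ (j + 1) =
      (1 / (j + 1 : ℝ)) * ∑ l ∈ Finset.Icc 1 (j + 1), (l : ℝ) * γ l * δ (j + 1 - l)) :
    Summable (fun j : ℕ => δ j * (A + j)) ∧
      (∏ i : Fin n, (β1 / β i) ^ (α i)) * β1 * (∑' j : ℕ, δ j * (A + j)) =
        ∑ i : Fin n, α i * β i := by
  have hβ1pos : 0 < β1 := hβ1 ▸ hβ _
  have hx : ∀ i, ‖1 - β1 / β i‖ < 1 := fun i => by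
    have := div_pos hβ1pos (hβ i)
    have := (div_le_one (hβ i)).2 (hmin i)
    rw [Real.norm_eq_abs, abs_lt]
    constructor <;> linarith
  have hrec : ∀ j : ℕ, ((j : ℝ) + 1) * δ (j + 1) =
      ∑ l ∈ Icc 1 (j + 1), (∑ i, α i * (1 - β1 / β i) ^ l) * δ (j + 1 - l) := fun j => by
    rw [hδ j, one_div, ← mul_assoc, mul_inv_cancel₀ (by positivity), one_mul]
    refine sum_congr rfl fun l hl => ?_
    have hl1 : 1 ≤ l := (mem_Icc.1 hl).1
    rw [hγ l hl1, mul_div_cancel₀ _ (Nat.cast_ne_zero.2 (by omega))]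
  have hsum := hasSum_mul_add_of_recurrence α _ hx hδ0 hrec
  rw [← hA] at hsum
  refine ⟨hsum.summable, ?_⟩
  have hP : ∏ i, (β1 / β i) ^ α i ≠ 0 :=
    (prod_pos fun i _ => rpow_pos_of_pos (div_pos hβ1pos (hβ i)) _).ne'
  simp only [hsum.tsum_eq, sub_sub_cancel, prod_inv_distrib, mul_sum]
  refine sum_congr rfl fun i _ => ?_
  have := (hβ i).ne'
  field_simp
end

section
/- For all integers m ≥ 1 and n ≥ 1, (1/(n−1)!) · { n^{m+n}/(m+n) + ∑_{i=1}^{n} (−1)^i C(n,i) [ ∑_{j=0}^{n−1} C(n−1,j) (−i)^{n−j−1} (n^{m+j+1} − i^{m+j+1})/(m+j+1) ] } = ∑_{i_1 + ⋯ + i_n = m} (m!/(i_1! ⋯ i_n!)) · 1/((i_1+1) ⋯ (i_n+1)), where the right sum ranges over all n-tuples of nonnegative integers summing to m; the identity holds in the rational numbers. -/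
/-!
The inner sum over `j` is the binomial expansion of `∫ₓᵇ tᵐ (t - x)ⁿ⁻¹ dt` at `b = n`, `x = i`:
a polynomial of degree `< n` in `x`, minus `c xᵐ⁺ⁿ` where `c = (-1)ⁿ⁻¹ (n-1)! m! / (m+n)!` is a
Beta value. The alternating sum over `i` is `(-1)ⁿ` times an `n`-th forward difference at `0`,
which kills the polynomial part, so the left side is `m! / (m+n)! · Δⁿ[xᵐ⁺ⁿ](0)`.
On the right, `multinomial · ∏ 1/(iₖ+1) = m! ∏ 1/(iₖ+1)!`, so the sum is `m!` times the
coefficient of `Xᵐ` in `((exp X - 1)/X)ⁿ`, that is of `Xᵐ⁺ⁿ` in `(exp X - 1)ⁿ`, which is the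
same number.
-/

open Finset PowerSeries
open scoped Nat fwdDiff

theorem sum_range_neg_one_pow_mul_choose_mul {R : Type*} [CommRing R] (f : R → R) (n : ℕ) :
    ∑ i ∈ range (n + 1), (-1) ^ i * (n.choose i : R) * f i = (-1) ^ n * Δ_[1] ^[n] f 0 := by
  rw [fwdDiff_iter_eq_sum_shift, mul_sum]
  refine sum_congr rfl fun i hi => ?_
  have hsq : ((-1 : R) ^ (n - i)) ^ 2 = 1 := by
    rw [← pow_mul]
    exact (even_two.mul_left _).neg_one_pow
  rw [← pow_sub_mul_pow (-1 : R) (Nat.lt_succ_iff.mp (mem_range.mp hi)), zero_add, nsmul_one,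
    zsmul_eq_mul]
  push_cast
  linear_combination (-(-1 : R) ^ i * n.choose i * f i) * hsq

theorem fwdDiff_iter_sum_mul_pow_eq_zero_of_lt {R ι : Type*} [CommRing R] (s : Finset ι)
    (a : ι → R) (e : ι → ℕ) {n : ℕ} (he : ∀ i ∈ s, e i < n) :
    Δ_[1] ^[n] (fun r : R => ∑ i ∈ s, a i * r ^ e i) = 0 := by
  simp_rw [← sum_apply _ _ (fun i r => a i * r ^ e i), fwdDiff_iter_finsetSum, sum_fn,
    ← smul_eq_mul, ← Pi.smul_def, fwdDiff_iter_const_smul, ← sum_fn]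
  exact sum_eq_zero fun i hi => smul_eq_zero_of_right _ (fwdDiff_iter_pow_eq_zero_of_lt (he i hi))

theorem PowerSeries.coeff_prod_fin {R : Type*} [CommSemiring R] (n d : ℕ) (f : Fin n → R⟦X⟧) :
    coeff d (∏ k, f k) = ∑ l ∈ Nat.antidiagonalTuple n d, ∏ k, coeff (l k) (f k) := by
  rw [coeff_prod]
  symm
  refine sum_equiv Finsupp.equivFunOnFinite.symm (fun l => ?_) fun l _ => rfl
  simp [Nat.mem_antidiagonalTuple]

section Field

variable {K : Type*} [Field K]

/-- `∫ₓᵇ tᵐ (t - x)ⁿ⁻¹ dt`, with `(t - x)ⁿ⁻¹` expanded binomially. -/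
def momentIntegral (m n : ℕ) (b x : K) : K :=
  ∑ j ∈ range n, ((n - 1).choose j : K) * (-x) ^ (n - j - 1) *
    ((b ^ (m + j + 1) - x ^ (m + j + 1)) / (m + j + 1))

theorem momentIntegral_zero_right (m : ℕ) {n : ℕ} (hn : 1 ≤ n) (b : K) :
    momentIntegral m n b 0 = b ^ (m + n) / (m + n) := by
  rw [momentIntegral, sum_eq_single_of_mem (n - 1) (mem_range.mpr (by omega))]
  · rw [Nat.choose_self, show n - (n - 1) - 1 = 0 by omega, show m + (n - 1) + 1 = m + n by omega,
      zero_pow (by omega)]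
    push_cast [Nat.cast_sub hn]
    ring
  · intro j hj _
    rw [neg_zero, zero_pow (by have := mem_range.mp hj; omega), mul_zero, zero_mul]

variable [CharZero K]

theorem Nat.cast_multinomial {α : Type*} (s : Finset α) (f : α → ℕ) :
    (Nat.multinomial s f : K) = (∑ i ∈ s, f i)! / ∏ i ∈ s, ((f i)! : K) := by
  rw [← Nat.multinomial_spec s f, Nat.cast_mul, Nat.cast_prod, mul_div_cancel_left₀]
  exact prod_ne_zero_iff.mpr fun i _ => Nat.cast_ne_zero.mpr (Nat.factorial_ne_zero _)

theorem fwdDiff_iter_one_div_succ (k : ℕ) :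
    Δ_[1] ^[k] (fun j : ℕ => (1 : K) / (j + 1)) =
      fun j => (-1 : K) ^ k * k ! * j ! / (j + k + 1)! := by
  induction k with
  | zero =>
    ext j
    have hj : (j ! : K) ≠ 0 := Nat.cast_ne_zero.mpr (Nat.factorial_ne_zero _)
    simp only [Function.iterate_zero, id_eq, pow_zero, Nat.factorial_zero, add_zero,
      Nat.factorial_succ]
    push_cast
    field_simp
  | succ k ih =>
    ext j
    rw [Function.iterate_succ_apply', ih, fwdDiff, show j + 1 + k + 1 = j + k + 1 + 1 by ring,
      show j + (k + 1) + 1 = j + k + 1 + 1 by ring, Nat.factorial_succ (j + k + 1),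
      Nat.factorial_succ j, Nat.factorial_succ k]
    push_cast
    have hM : (j : K) + k + 1 + 1 ≠ 0 := by exact_mod_cast Nat.succ_ne_zero (j + k + 1)
    field_simp
    ring

theorem sum_range_choose_mul_neg_one_pow_div (m k : ℕ) :
    ∑ j ∈ range (k + 1), (k.choose j : K) * (-1) ^ (k - j) / (m + j + 1) =
      (-1) ^ k * k ! * m ! / (m + k + 1)! := by
  rw [← congrFun (fwdDiff_iter_one_div_succ k) m, fwdDiff_iter_eq_sum_shift]
  refine sum_congr rfl fun j _ => ?_
  simp only [smul_eq_mul, mul_one, zsmul_eq_mul]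
  push_cast
  ring

theorem fwdDiff_iter_momentIntegral (m : ℕ) {n : ℕ} (hn : 1 ≤ n) (b : K) :
    Δ_[1] ^[n] (momentIntegral m n b) 0 =
      (-1) ^ n * (n - 1)! * m ! / (m + n)! * Δ_[1] ^[n] (fun x : K => x ^ (m + n)) 0 := by
  have hsplit : momentIntegral m n b =
      (fun x => ∑ j ∈ range n, ((n - 1).choose j : K) * (-1) ^ (n - j - 1) * b ^ (m + j + 1) /
          (m + j + 1) * x ^ (n - j - 1)) +
        (-∑ j ∈ range n, ((n - 1).choose j : K) * (-1) ^ (n - 1 - j) / (m + j + 1)) •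
          fun x => x ^ (m + n) := by
    ext x
    simp only [momentIntegral, Pi.add_apply, Pi.smul_apply, smul_eq_mul, neg_mul, sum_mul,
      ← sum_neg_distrib, ← sum_add_distrib]
    refine sum_congr rfl fun j hj => ?_
    have hj := mem_range.mp hj
    rw [show n - 1 - j = n - j - 1 by omega, neg_pow x,
      show m + n = (n - j - 1) + (m + j + 1) by omega, pow_add]
    ring
  obtain ⟨k, rfl⟩ : ∃ k, n = k + 1 := ⟨n - 1, by omega⟩
  rw [hsplit, fwdDiff_iter_add, fwdDiff_iter_const_smul,
    fwdDiff_iter_sum_mul_pow_eq_zero_of_lt _ _ _ fun j hj => by have := mem_range.mp hj; omega,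
    Nat.add_sub_cancel, sum_range_choose_mul_neg_one_pow_div, show m + k + 1 = m + (k + 1) by ring]
  simp only [Pi.add_apply, Pi.zero_apply, Pi.smul_apply, smul_eq_mul, zero_add, pow_succ]
  ring

theorem sum_range_neg_one_pow_mul_choose_mul_momentIntegral (m : ℕ) {n : ℕ} (hn : 1 ≤ n)
    (b : K) :
    ∑ i ∈ range (n + 1), (-1) ^ i * (n.choose i : K) * momentIntegral m n b i =
      (n - 1)! * m ! / (m + n)! * Δ_[1] ^[n] (fun x : K => x ^ (m + n)) 0 := by
  have hsq : ((-1 : K) ^ n) ^ 2 = 1 := by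
    rw [← pow_mul]
    exact (even_two.mul_left _).neg_one_pow
  rw [sum_range_neg_one_pow_mul_choose_mul, fwdDiff_iter_momentIntegral m hn]
  linear_combination ((n - 1)! * m ! / (m + n)! * Δ_[1] ^[n] (fun x : K => x ^ (m + n)) 0) * hsq

theorem PowerSeries.X_mul_mk_inv_factorial_succ :
    X * mk (fun k => ((k + 1)! : K)⁻¹) = exp K - 1 := by
  ext (_ | k) <;> simp [coeff_succ_X_mul, coeff_exp]

theorem PowerSeries.coeff_exp_sub_one_pow (n k : ℕ) :
    coeff k ((exp K - 1) ^ n) = Δ_[1] ^[n] (fun x : K => x ^ k) 0 / k ! := by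
  rw [sub_eq_add_neg, add_pow, map_sum, fwdDiff_iter_eq_sum_shift, sum_div]
  refine sum_congr rfl fun i _ => ?_
  have hC : (-1 : K⟦X⟧) ^ (n - i) * (n.choose i : K⟦X⟧) =
      C ((-1) ^ (n - i) * (n.choose i : K)) := by
    simp
  rw [exp_pow_eq_rescale_exp, mul_assoc, hC, coeff_mul_C, coeff_rescale, coeff_exp]
  simp only [one_div, map_inv₀, map_natCast, nsmul_eq_mul, mul_one, zero_add, zsmul_eq_mul,
    Int.cast_mul, Int.cast_pow, Int.cast_neg, Int.cast_one, Int.cast_natCast]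
  ring

theorem sum_antidiagonalTuple_multinomial_mul_prod_one_div_succ (m n : ℕ) :
    ∑ f ∈ Nat.antidiagonalTuple n m,
        (Nat.multinomial univ f : K) * ∏ k : Fin n, (1 : K) / (f k + 1) =
      m ! / (m + n)! * Δ_[1] ^[n] (fun x : K => x ^ (m + n)) 0 := by
  set q : K⟦X⟧ := mk fun k => ((k + 1)! : K)⁻¹
  have hterm : ∀ f ∈ Nat.antidiagonalTuple n m,
      (Nat.multinomial univ f : K) * ∏ k : Fin n, (1 : K) / (f k + 1) =
        m ! * ∏ k, coeff (f k) q := by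
    intro f hf
    rw [Nat.cast_multinomial, Nat.mem_antidiagonalTuple.mp hf, div_mul_eq_mul_div, mul_div_assoc,
      ← prod_div_distrib]
    congr 1
    refine prod_congr rfl fun k _ => ?_
    rw [coeff_mk, Nat.factorial_succ, Nat.cast_mul]
    push_cast
    field_simp
  calc _ = m ! * coeff m (q ^ n) := by
        rw [sum_congr rfl hterm, ← mul_sum, ← coeff_prod_fin, prod_const, card_univ,
          Fintype.card_fin]
    _ = m ! * coeff (m + n) ((exp K - 1) ^ n) := by
        rw [← X_mul_mk_inv_factorial_succ, mul_pow, coeff_X_pow_mul]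
    _ = _ := by rw [coeff_exp_sub_one_pow]; ring

end Field

theorem uniform_moment_identity_general (m n : ℕ) (hn : 1 ≤ n) :
    (1 / ((n - 1).factorial : ℚ)) *
        ((n : ℚ) ^ (m + n) / (m + n) +
          ∑ i ∈ Finset.Icc 1 n, (-1 : ℚ) ^ i * n.choose i *
            ∑ j ∈ Finset.range n, ((n - 1).choose j : ℚ) * (-(i : ℚ)) ^ (n - j - 1) *
              (((n : ℚ) ^ (m + j + 1) - (i : ℚ) ^ (m + j + 1)) / (m + j + 1))) =
      ∑ f ∈ Finset.Nat.antidiagonalTuple n m,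
        (Nat.multinomial Finset.univ f : ℚ) * ∏ k : Fin n, (1 : ℚ) / (f k + 1) := by
  change 1 / _ * (_ + ∑ i ∈ Icc 1 n, (-1 : ℚ) ^ i * n.choose i * momentIntegral m n (n : ℚ) i) = _
  have hsum : (n : ℚ) ^ (m + n) / (m + n) +
      ∑ i ∈ Icc 1 n, (-1 : ℚ) ^ i * n.choose i * momentIntegral m n (n : ℚ) i =
        ∑ i ∈ range (n + 1), (-1 : ℚ) ^ i * n.choose i * momentIntegral m n (n : ℚ) i := by
    rw [Nat.range_succ_eq_Icc_zero, ← insert_Icc_add_one_left_eq_Icc n.zero_le,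
      sum_insert (by simp), ← momentIntegral_zero_right m hn]
    simp
  rw [hsum, sum_range_neg_one_pow_mul_choose_mul_momentIntegral m hn,
    sum_antidiagonalTuple_multinomial_mul_prod_one_div_succ]
  field_simp

/-- For integers `m ≥ 1` and `n ≥ 1`,
`(1/(n-1)!) (n^{m+n}/(m+n) + ∑_{i=1}^{n} (-1)^i C(n,i)
  ∑_{j=0}^{n-1} C(n-1,j) (-i)^{n-j-1} (n^{m+j+1} - i^{m+j+1})/(m+j+1))`
equals `∑_{i₁+⋯+iₙ=m} (m!/(i₁!⋯iₙ!)) / ((i₁+1)⋯(iₙ+1))`, in the rationals. -/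
theorem uniform_moment_identity (m n : ℕ) (hm : 1 ≤ m) (hn : 1 ≤ n) :
    (1 / ((n - 1).factorial : ℚ)) *
        ((n : ℚ) ^ (m + n) / (m + n) +
          ∑ i ∈ Finset.Icc 1 n, (-1 : ℚ) ^ i * n.choose i *
            ∑ j ∈ Finset.range n, ((n - 1).choose j : ℚ) * (-(i : ℚ)) ^ (n - j - 1) *
              (((n : ℚ) ^ (m + j + 1) - (i : ℚ) ^ (m + j + 1)) / (m + j + 1))) =
      ∑ f ∈ Finset.Nat.antidiagonalTuple n m,
        (Nat.multinomial Finset.univ f : ℚ) * ∏ k : Fin n, (1 : ℚ) / (f k + 1) :=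
  uniform_moment_identity_general m n hn
end

section
/- Let n ≥ 2 and let X_1, …, X_n be independent random variables with X_i uniformly distributed on [0, a_i], a_i > 0. Then the distribution of S_n = X_1 + ⋯ + X_n has density with respect to Lebesgue measure given, for 0 ≤ x ≤ a_1 + ⋯ + a_n, by h̃_n(x) = (1/((n−1)! ∏_{i=1}^{n} a_i)) · { x^{n−1} + ∑_{i=1}^{n} (−1)^i ∑_{1 ≤ j_1 < ⋯ < j_i ≤ n} [ (x − ∑_{l=1}^{i} a_{j_l})_+ ]^{n−1} }, and h̃_n(x) = 0 outside [0, a_1 + ⋯ + a_n], where y_+ = max(y, 0). -/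
open Finset MeasureTheory ProbabilityTheory

/-! The law of a sum of independent variables is the convolution of their laws, and convolving a
density `g` with the uniform density on `[0, a]` replaces it by its moving average
`x ↦ a⁻¹ ∫_{x-a}^{x} g`. Write the candidate density for `∑_{i ∈ s} Xᵢ` as
`((|s|-1)! ∏ aᵢ)⁻¹ ∑_{T ⊆ s} (-1)^{|T|} ((x - ∑_{i ∈ T} aᵢ)₊)^{|s|-1}`. Averaging over a window of
length `a_j` raises every truncated power by one and pairs each `T` with `T ∪ {j}`, which gives the
same expression for `s ∪ {j}`; so induction on `s`, starting from the uniform density itself,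
identifies the law. The density vanishes beyond `∑ aᵢ` because each averaging step moves the right
end of the support by exactly the window length. -/

section TruncPow

/-- `(y₊)^k`, except that `truncPow 0` is the right-continuous Heaviside step: with this convention
`truncPow (k + 1)` has right derivative `(k + 1) * truncPow k` at every point, `0` included. -/
noncomputable def truncPow (k : ℕ) (y : ℝ) : ℝ := if 0 ≤ y then y ^ k else 0

variable {k : ℕ} {y : ℝ}

lemma truncPow_of_nonneg (hy : 0 ≤ y) : truncPow k y = y ^ k := if_pos hy

lemma truncPow_of_neg (hy : y < 0) : truncPow k y = 0 := if_neg hy.not_ge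

lemma truncPow_eq_max_pow (hk : k ≠ 0) (y : ℝ) : truncPow k y = max y 0 ^ k := by
  rcases le_or_gt 0 y with hy | hy
  · rw [truncPow_of_nonneg hy, max_eq_left hy]
  · rw [truncPow_of_neg hy, max_eq_right hy.le, zero_pow hk]

lemma truncPow_nonneg (k : ℕ) (y : ℝ) : 0 ≤ truncPow k y := by
  unfold truncPow; split_ifs with hy <;> positivity

lemma monotone_truncPow (k : ℕ) : Monotone (truncPow k) := by
  intro y z hyz
  rcases le_or_gt 0 y with hy | hy
  · rw [truncPow_of_nonneg hy, truncPow_of_nonneg (hy.trans hyz)]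
    exact pow_le_pow_left₀ hy hyz k
  · rw [truncPow_of_neg hy]
    exact truncPow_nonneg k z

lemma intervalIntegrable_truncPow_sub (k : ℕ) (b c d : ℝ) :
    IntervalIntegrable (fun t => truncPow k (t - b)) volume c d :=
  ((monotone_truncPow k).comp fun _ _ h => sub_le_sub_right h b).intervalIntegrable

lemma continuous_truncPow_succ (k : ℕ) : Continuous (truncPow (k + 1)) := by
  rw [funext (truncPow_eq_max_pow k.succ_ne_zero)]
  fun_prop

lemma hasDerivWithinAt_truncPow_succ (k : ℕ) (x : ℝ) :
    HasDerivWithinAt (truncPow (k + 1)) ((k + 1) * truncPow k x) (Set.Ioi x) x := by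
  rcases lt_or_ge x 0 with hx | hx
  · rw [truncPow_of_neg hx, mul_zero]
    refine ((hasDerivAt_const x 0).congr_of_eventuallyEq ?_).hasDerivWithinAt
    filter_upwards [eventually_lt_nhds hx] with y hy using truncPow_of_neg hy
  · rw [truncPow_of_nonneg hx]
    have := (hasDerivAt_pow (k + 1) x).hasDerivWithinAt (s := Set.Ioi x)
    push_cast at this
    exact this.congr (fun y hy => truncPow_of_nonneg (hx.trans hy.out.le)) (truncPow_of_nonneg hx)

lemma integral_truncPow (k : ℕ) (c d : ℝ) :
    ∫ t in c..d, truncPow k t = (truncPow (k + 1) d - truncPow (k + 1) c) / (k + 1) := by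
  rw [sub_div]
  refine intervalIntegral.integral_eq_sub_of_hasDeriv_right
    ((continuous_truncPow_succ k).div_const _).continuousOn (fun x _ => ?_)
    ((monotone_truncPow k).intervalIntegrable)
  have := (hasDerivWithinAt_truncPow_succ k x).div_const ((k : ℝ) + 1)
  rwa [mul_div_cancel_left₀ _ k.cast_add_one_ne_zero] at this

lemma integral_truncPow_sub (k : ℕ) (b c d : ℝ) :
    ∫ t in c..d, truncPow k (t - b) =
      (truncPow (k + 1) (d - b) - truncPow (k + 1) (c - b)) / (k + 1) := by
  rw [intervalIntegral.integral_comp_sub_right (truncPow k), integral_truncPow]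

end TruncPow

section SumUniformDensity

variable {ι : Type*} (a : ι → ℝ)

/-- The paper's `h̃ₙ`, with the alternating sum running over all subsets `T ⊆ s` ungrouped. -/
noncomputable def sumUniformDensity (s : Finset ι) (x : ℝ) : ℝ :=
  (1 / (((#s - 1).factorial : ℝ) * ∏ i ∈ s, a i)) *
    ∑ T ∈ s.powerset, (-1 : ℝ) ^ #T * truncPow (#s - 1) (x - ∑ i ∈ T, a i)

variable {a}

lemma measurable_sumUniformDensity (s : Finset ι) : Measurable (sumUniformDensity a s) :=
  (Finset.measurable_sum _ fun _ _ =>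
    ((monotone_truncPow _).measurable.comp (measurable_sub_const _)).const_mul _).const_mul _

lemma intervalIntegrable_sumUniformDensity (s : Finset ι) (c d : ℝ) :
    IntervalIntegrable (sumUniformDensity a s) volume c d := by
  have := IntervalIntegrable.sum (μ := volume) (a := c) (b := d) s.powerset
    (f := fun T t => (-1 : ℝ) ^ #T * truncPow (#s - 1) (t - ∑ i ∈ T, a i))
    fun _ _ => (intervalIntegrable_truncPow_sub _ _ c d).const_mul _
  rw [Finset.sum_fn] at this
  exact this.const_mul _

lemma sumUniformDensity_singleton (i : ι) (x : ℝ) :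
    sumUniformDensity a {i} x = 1 / a i * (truncPow 0 x - truncPow 0 (x - a i)) := by
  classical
  have hpow : ({i} : Finset ι).powerset = {∅, {i}} := by
    ext T; simp [subset_singleton_iff]
  rw [sumUniformDensity, hpow, sum_pair (singleton_ne_empty i).symm]
  simp only [card_empty, card_singleton, sum_empty, sum_singleton, prod_singleton, sub_zero,
    Nat.sub_self, Nat.factorial_zero, Nat.cast_one]
  ring

lemma sumUniformDensity_singleton_of_ne {i : ι} (hi : 0 ≤ a i) {x : ℝ} (hx : x ≠ a i) :
    sumUniformDensity a {i} x = if x ∈ Set.Icc 0 (a i) then 1 / a i else 0 := by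
  rw [sumUniformDensity_singleton]
  rcases lt_or_ge x 0 with h0 | h0
  · rw [truncPow_of_neg h0, truncPow_of_neg (by linarith), if_neg (fun h => h0.not_ge h.1)]
    ring
  rcases lt_or_gt_of_ne hx with ha | ha
  · rw [truncPow_of_nonneg h0, truncPow_of_neg (by linarith), if_pos ⟨h0, ha.le⟩]
    ring
  · rw [truncPow_of_nonneg h0, truncPow_of_nonneg (by linarith), if_neg (fun h => ha.not_ge h.2)]
    ring

lemma sumUniformDensity_cons {s : Finset ι} (hs : s.Nonempty) {j : ι} (hj : j ∉ s) (x : ℝ) :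
    sumUniformDensity a (s.cons j hj) x = 1 / a j * ∫ t in x - a j..x, sumUniformDensity a s t := by
  classical
  obtain ⟨k, hk⟩ := Nat.exists_eq_succ_of_ne_zero hs.card_pos.ne'
  have hsplit : ∑ T ∈ (s.cons j hj).powerset, (-1 : ℝ) ^ #T * truncPow (k + 1) (x - ∑ i ∈ T, a i)
      = ∑ T ∈ s.powerset, (-1 : ℝ) ^ #T *
          (truncPow (k + 1) (x - ∑ i ∈ T, a i) - truncPow (k + 1) (x - a j - ∑ i ∈ T, a i)) := by
    rw [cons_eq_insert, sum_powerset_insert hj, ← sum_add_distrib]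
    refine sum_congr rfl fun T hT => ?_
    have hjT : j ∉ T := fun h => hj (mem_powerset.mp hT h)
    rw [card_insert_of_notMem hjT, sum_insert hjT, pow_succ, sub_add_eq_sub_sub]
    ring
  have hint : ∫ t in x - a j..x, sumUniformDensity a s t
      = 1 / ((k.factorial : ℝ) * ∏ i ∈ s, a i) * ∑ T ∈ s.powerset, (-1 : ℝ) ^ #T *
          ((truncPow (k + 1) (x - ∑ i ∈ T, a i) - truncPow (k + 1) (x - a j - ∑ i ∈ T, a i))
            / (k + 1)) := by
    simp only [sumUniformDensity, hk, Nat.succ_sub_one]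
    rw [intervalIntegral.integral_const_mul, intervalIntegral.integral_finsetSum
      fun _ _ => (intervalIntegrable_truncPow_sub _ _ _ _).const_mul _]
    congr 1
    refine sum_congr rfl fun T _ => ?_
    rw [intervalIntegral.integral_const_mul, integral_truncPow_sub, sub_sub]
  rw [hint, sumUniformDensity, card_cons, hk, Nat.add_sub_cancel, hsplit, prod_cons,
    Nat.factorial_succ, mul_sum, mul_sum, mul_sum]
  refine sum_congr rfl fun T _ => ?_
  push_cast
  field_simp

lemma sumUniformDensity_nonneg {s : Finset ι} (hs : s.Nonempty) (ha : ∀ i ∈ s, 0 ≤ a i) (x : ℝ) :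
    0 ≤ sumUniformDensity a s x := by
  induction hs using Finset.Nonempty.cons_induction generalizing x with
  | singleton i =>
    have hi := ha i (mem_singleton_self i)
    have : truncPow 0 (x - a i) ≤ truncPow 0 x := monotone_truncPow 0 (by linarith)
    rw [sumUniformDensity_singleton]
    exact mul_nonneg (by positivity) (by linarith)
  | cons j s hj hs ih =>
    have hj' := ha j (mem_cons_self j s)
    rw [sumUniformDensity_cons hs hj]
    refine mul_nonneg (by positivity) (intervalIntegral.integral_nonneg (by linarith) fun t _ => ?_)
    exact ih (fun i hi => ha i (mem_cons_of_mem hi)) t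

lemma sumUniformDensity_of_neg {s : Finset ι} (ha : ∀ i ∈ s, 0 ≤ a i) {x : ℝ} (hx : x < 0) :
    sumUniformDensity a s x = 0 := by
  rw [sumUniformDensity, sum_eq_zero, mul_zero]
  intro T hT
  have : 0 ≤ ∑ i ∈ T, a i := sum_nonneg fun i hi => ha i (mem_powerset.mp hT hi)
  rw [truncPow_of_neg (by linarith), mul_zero]

lemma sumUniformDensity_of_sum_lt {s : Finset ι} (hs : s.Nonempty) (ha : ∀ i ∈ s, 0 ≤ a i)
    {x : ℝ} (hx : ∑ i ∈ s, a i < x) : sumUniformDensity a s x = 0 := by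
  induction hs using Finset.Nonempty.cons_induction generalizing x with
  | singleton i =>
    rw [sum_singleton] at hx
    rw [sumUniformDensity_singleton, truncPow_of_nonneg (by linarith [ha i (mem_singleton_self i)]),
      truncPow_of_nonneg (by linarith), pow_zero, pow_zero, sub_self, mul_zero]
  | cons j s hj hs ih =>
    rw [sum_cons] at hx
    have hj' := ha j (mem_cons_self j s)
    rw [sumUniformDensity_cons hs hj, intervalIntegral.integral_congr (g := fun _ => 0),
      intervalIntegral.integral_zero, mul_zero]
    intro t ht
    rw [Set.uIcc_of_le (by linarith)] at ht
    exact ih (fun i hi => ha i (mem_cons_of_mem hi)) (by linarith [ht.1])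

lemma sumUniformDensity_eq_ite {s : Finset ι} (hs : 2 ≤ #s) (ha : ∀ i ∈ s, 0 ≤ a i) (x : ℝ) :
    sumUniformDensity a s x =
      if x ∈ Set.Icc 0 (∑ i ∈ s, a i) then
        (1 / (((#s - 1).factorial : ℝ) * ∏ i ∈ s, a i)) *
          (x ^ (#s - 1) + ∑ i ∈ Finset.Icc 1 #s, (-1 : ℝ) ^ i *
            ∑ T ∈ powersetCard i s, max (x - ∑ l ∈ T, a l) 0 ^ (#s - 1))
      else 0 := by
  split_ifs with hx
  · rw [sumUniformDensity, sum_powerset, range_eq_Ico, sum_eq_sum_Ico_succ_bot (by omega),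
      powersetCard_zero, sum_singleton, ← Finset.Ico_add_one_right_eq_Icc]
    simp only [truncPow_eq_max_pow (by omega : #s - 1 ≠ 0), card_empty, sum_empty, sub_zero,
      max_eq_left hx.1, pow_zero, one_mul, mul_sum]
    congr 2
    refine sum_congr rfl fun i _ => sum_congr rfl fun T hT => ?_
    rw [(mem_powersetCard.mp hT).2]
  · rcases not_and_or.mp hx with hx | hx
    · exact sumUniformDensity_of_neg ha (not_le.mp hx)
    · exact sumUniformDensity_of_sum_lt (card_pos.mp (by omega)) ha (not_le.mp hx)

end SumUniformDensity

lemma lconvolution_ofReal_uniform {g : ℝ → ℝ} (hg : ∀ t, 0 ≤ g t) {a : ℝ} (ha : 0 ≤ a) {x : ℝ}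
    (hgx : IntervalIntegrable g volume (x - a) x) :
    ((fun t => ENNReal.ofReal (g t)) ⋆ₗ
        fun t => ENNReal.ofReal (if t ∈ Set.Icc 0 a then 1 / a else 0)) x =
      ENNReal.ofReal (1 / a * ∫ t in x - a..x, g t) := by
  have hwindow : ∀ t, ENNReal.ofReal (g t) *
      ENNReal.ofReal (if -t + x ∈ Set.Icc 0 a then 1 / a else 0) =
      ENNReal.ofReal ((Set.Icc (x - a) x).indicator (fun t => 1 / a * g t) t) := by
    intro t
    by_cases ht : t ∈ Set.Icc (x - a) x
    · rw [if_pos (by constructor <;> linarith [ht.1, ht.2]), Set.indicator_of_mem ht,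
        ← ENNReal.ofReal_mul (hg t), mul_comm]
    · rw [if_neg (fun h => ht ⟨by linarith [h.2], by linarith [h.1]⟩),
        Set.indicator_of_notMem ht, ENNReal.ofReal_zero, mul_zero]
  have hint : IntegrableOn (fun t => 1 / a * g t) (Set.Icc (x - a) x) := by
    rw [integrableOn_Icc_iff_integrableOn_Ioc]
    exact (hgx.const_mul _).1
  rw [lconvolution_def, lintegral_congr hwindow, ← ofReal_integral_eq_lintegral_ofReal
    (hint.integrable_indicator measurableSet_Icc)
    (ae_of_all _ fun t => Set.indicator_nonneg (fun t _ => mul_nonneg (by positivity) (hg t)) t),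
    integral_indicator measurableSet_Icc, integral_Icc_eq_integral_Ioc,
    ← intervalIntegral.integral_of_le (by linarith), intervalIntegral.integral_const_mul]

section Law

variable {Ω ι : Type*} [MeasurableSpace Ω] {μ : Measure Ω} [IsFiniteMeasure μ]
  {X : ι → Ω → ℝ} {a : ι → ℝ}

theorem map_sum_eq_withDensity_sumUniformDensity (ha : ∀ i, 0 ≤ a i)
    (hmeas : ∀ i, Measurable (X i)) (hindep : iIndepFun X μ)
    (hlaw : ∀ i, μ.map (X i) =
      volume.withDensity fun x => ENNReal.ofReal (if x ∈ Set.Icc 0 (a i) then 1 / a i else 0))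
    {s : Finset ι} (hs : s.Nonempty) :
    μ.map (fun ω => ∑ i ∈ s, X i ω) =
      volume.withDensity fun x => ENNReal.ofReal (sumUniformDensity a s x) := by
  induction hs using Finset.Nonempty.cons_induction with
  | singleton i =>
    simp only [sum_singleton]
    rw [hlaw i]
    refine withDensity_congr_ae ?_
    filter_upwards [Measure.ae_ne volume (a i)] with x hx
    rw [sumUniformDensity_singleton_of_ne (ha i) hx]
  | cons j s hj hs ih =>
    have hsum : (fun ω => ∑ i ∈ s.cons j hj, X i ω) = (∑ i ∈ s, X i) + X j := by
      ext ω
      rw [sum_cons, Pi.add_apply, Finset.sum_apply, add_comm]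
    have hunif : Measurable fun x =>
        ENNReal.ofReal (if x ∈ Set.Icc 0 (a j) then 1 / a j else 0) :=
      (measurable_const.ite measurableSet_Icc measurable_const).ennreal_ofReal
    rw [hsum, (hindep.indepFun_finsetSum_of_notMem hmeas hj).map_add_eq_map_conv_map
      (by fun_prop) (hmeas j), Finset.sum_fn, ih, hlaw j,
      conv_withDensity_eq_lconvolution (measurable_sumUniformDensity s).ennreal_ofReal hunif]
    congr 1
    funext x
    rw [lconvolution_ofReal_uniform (sumUniformDensity_nonneg hs fun i _ => ha i) (ha j)
      (intervalIntegrable_sumUniformDensity s _ _), sumUniformDensity_cons hs hj]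

end Law

/-- If `X₁, …, Xₙ` (`n ≥ 2`) are independent random variables with `Xᵢ` uniform
on `[0, aᵢ]` (`aᵢ > 0`), then `Sₙ = X₁ + ⋯ + Xₙ` has density
`h̃ₙ(x) = (1/((n-1)! ∏ᵢ aᵢ)) (x^{n-1} + ∑_{i=1}^{n} (-1)^i
  ∑_{1 ≤ j₁ < ⋯ < jᵢ ≤ n} ((x - ∑ₗ a_{jₗ})₊)^{n-1})`
for `0 ≤ x ≤ a₁ + ⋯ + aₙ` and `0` otherwise, where `y₊ = max y 0` and the
inner sum is over all `i`-element subsets of `{1, …, n}`. -/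
theorem sum_indep_uniform_density
    {Ω : Type*} [MeasurableSpace Ω] (μ : Measure Ω) [IsProbabilityMeasure μ]
    (n : ℕ) (hn : 2 ≤ n) (a : Fin n → ℝ) (ha : ∀ i, 0 < a i)
    (X : Fin n → Ω → ℝ) (hmeas : ∀ i, Measurable (X i))
    (hindep : iIndepFun X μ)
    (hlaw : ∀ i, Measure.map (X i) μ =
      volume.withDensity fun x =>
        ENNReal.ofReal (if x ∈ Set.Icc 0 (a i) then 1 / a i else 0)) :
    Measure.map (fun ω => ∑ i : Fin n, X i ω) μ =
      volume.withDensity fun x =>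
        ENNReal.ofReal (if x ∈ Set.Icc 0 (∑ i : Fin n, a i) then
          (1 / (((n - 1).factorial : ℝ) * ∏ i : Fin n, a i)) *
            (x ^ (n - 1) +
              ∑ i ∈ Finset.Icc 1 n, (-1 : ℝ) ^ i *
                ∑ S ∈ Finset.powersetCard i (Finset.univ : Finset (Fin n)),
                  max (x - ∑ l ∈ S, a l) 0 ^ (n - 1))
        else 0) := by
  have ha' : ∀ i, 0 ≤ a i := fun i => (ha i).le
  have hcard : #(univ : Finset (Fin n)) = n := card_fin n
  have hn' : 2 ≤ #(univ : Finset (Fin n)) := by rwa [hcard]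
  rw [map_sum_eq_withDensity_sumUniformDensity ha' hmeas hindep hlaw
    ⟨⟨0, by omega⟩, mem_univ _⟩]
  simp_rw [sumUniformDensity_eq_ite hn' fun i _ => ha' i, hcard]
end

section
/- For all integers m ≥ 1, n ≥ 2 and positive reals a_1, …, a_n, with A = a_1 + ⋯ + a_n, one has (1/((n−1)! ∏_{i=1}^{n} a_i)) · [ A^{m+n}/(m+n) + B(n) ] = ∑_{i_1 + ⋯ + i_n = m} (m!/(i_1! ⋯ i_n!)) · (a_1^{i_1}/(i_1+1)) ⋯ (a_n^{i_n}/(i_n+1)), where B(n) = ∑_{i=1}^{n} (−1)^i ∑_{1 ≤ j_1 < ⋯ < j_i ≤ n} [ ∑_{k=0}^{n−1} C(n−1,k) (−∑_{l=1}^{i} a_{j_l})^{n−1−k} · (A^{k+m+1} − (∑_{l=1}^{i} a_{j_l})^{k+m+1})/(k+m+1) ], and the right-hand sum ranges over all n-tuples of nonnegative integers summing to m. -/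
/-!
For a subset `S` put `x = ∑_{l ∈ S} a_l`. The inner sum over `k` is `∫_x^A (t - x)^{n-1} t^m dt`
with `(t - x)^{n-1}` expanded binomially: a polynomial of degree `< n` in `x`, plus
`(-1)^n (n-1)! m! / (m+n)! · x^{m+n}`, the constant being minus the `(n-1)`-st forward difference of
`k ↦ 1/(k+m+1)` at `0`.

Expanding `∑_S (-1)^{|S|} (∑_{l ∈ S} a_l)^M` by the multinomial theorem and summing over `S` first
leaves `∏_l (0^{g_l} - a_l^{g_l})` at each exponent vector `g`, which vanishes unless every `g_l ≥ 1`.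
Hence these alternating sums vanish for `M < n`, so the polynomial part drops out,
and for `M = m + n` the substitution `g = f + 1` turns the sum into
`(-1)^n (m+n)!/m! ∏_l a_l` times the right-hand side.
-/

open Finset Nat fwdDiff

section ForwardDifference

variable {K : Type*} [Field K] [CharZero K]

theorem fwdDiff_iter_inv_natCast_add_add_one (N m y : ℕ) :
    (Δ_[1])^[N] (fun k : ℕ => ((k : K) + m + 1)⁻¹) y =
      (-1) ^ N * N ! * (y + m)! / (y + m + N + 1)! := by
  induction N generalizing y with
  | zero =>
    have : ((y + m)! : K) ≠ 0 := mod_cast factorial_ne_zero _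
    rw [Function.iterate_zero, id, add_zero, factorial_succ, factorial_zero]
    push_cast
    field_simp
  | succ N ih =>
    have h₁ : ((y + m)! : K) ≠ 0 := mod_cast factorial_ne_zero _
    have h₂ : ((y + m + N + 1)! : K) ≠ 0 := mod_cast factorial_ne_zero _
    have h₃ : ((y + m + N + 1 + 1 : ℕ) : K) ≠ 0 := mod_cast succ_ne_zero (y + m + N + 1)
    rw [Function.iterate_succ_apply', fwdDiff, ih, ih, show y + 1 + m = y + m + 1 by ring,
      show y + m + 1 + N + 1 = y + m + N + 1 + 1 by ring,
      show y + m + (N + 1) + 1 = y + m + N + 1 + 1 by ring,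
      factorial_succ (y + m + N + 1), factorial_succ (y + m), factorial_succ N]
    push_cast at h₃ ⊢
    field_simp
    ring

theorem sum_range_neg_one_pow_mul_choose_div (N m : ℕ) :
    ∑ k ∈ range (N + 1), (-1) ^ (N - k) * N.choose k / ((k : K) + m + 1) =
      (-1) ^ N * N ! * m ! / (N + m + 1)! := by
  have h := fwdDiff_iter_eq_sum_shift 1 (fun k : ℕ => ((k : K) + m + 1)⁻¹) N 0
  rw [fwdDiff_iter_inv_natCast_add_add_one, zero_add] at h
  rw [show N + m + 1 = m + N + 1 by ring, h]
  refine sum_congr rfl fun k _ => ?_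
  simp [div_eq_mul_inv]

end ForwardDifference

section ShiftedMoment

variable {K : Type*} [Field K]

def shiftedMoment (N m : ℕ) (A x : K) : K :=
  ∑ k ∈ range (N + 1), (N.choose k : K) * (-x) ^ (N - k) *
    ((A ^ (k + m + 1) - x ^ (k + m + 1)) / (k + m + 1))

theorem shiftedMoment_zero (N m : ℕ) (A : K) :
    shiftedMoment N m A 0 = A ^ (N + m + 1) / (N + m + 1) := by
  rw [shiftedMoment, sum_eq_single_of_mem N (self_mem_range_succ N)]
  · simp
  · intro k hk hkN
    have : N - k ≠ 0 := by have := mem_range.1 hk; omega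
    simp [this]

theorem shiftedMoment_eq [CharZero K] (N m : ℕ) (A x : K) :
    shiftedMoment N m A x =
      ∑ k ∈ range (N + 1), N.choose k * (-1) ^ (N - k) * A ^ (k + m + 1) / (k + m + 1) * x ^ (N - k)
        + (-1) ^ (N + 1) * (N ! * m ! / (N + m + 1)!) * x ^ (N + m + 1) := by
  have hterm : ∀ k ∈ range (N + 1),
      (N.choose k : K) * (-x) ^ (N - k) * ((A ^ (k + m + 1) - x ^ (k + m + 1)) / (k + m + 1)) =
        N.choose k * (-1) ^ (N - k) * A ^ (k + m + 1) / (k + m + 1) * x ^ (N - k)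
          - (-1) ^ (N - k) * N.choose k / (k + m + 1) * x ^ (N + m + 1) := by
    intro k hk
    have hpow : x ^ (N - k) * x ^ (k + m + 1) = x ^ (N + m + 1) := by
      rw [← pow_add]; congr 1; have := mem_range.1 hk; omega
    rw [neg_pow, ← hpow]
    ring
  rw [shiftedMoment, sum_congr rfl hterm, sum_sub_distrib, ← sum_mul,
    sum_range_neg_one_pow_mul_choose_div]
  ring

end ShiftedMoment

section AlternatingSubsetSums

variable {ι R : Type*} [DecidableEq ι] [CommRing R]

theorem sum_powerset_neg_one_pow_card_mul_prod_ite_pow (s : Finset ι) (a : ι → R) (g : ι → ℕ) :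
    ∑ S ∈ s.powerset, (-1) ^ #S * ∏ i ∈ s, (if i ∈ S then a i else 0) ^ g i =
      ∏ i ∈ s, (0 ^ g i - a i ^ g i) := by
  rw [prod_sub]
  refine sum_congr rfl fun S hS => ?_
  simp only [ite_pow, prod_ite, filter_mem_eq_inter, filter_not,
    inter_eq_right.2 (mem_powerset.1 hS)]
  ring

theorem sum_powerset_neg_one_pow_card_mul_sum_pow (s : Finset ι) (a : ι → R) (M : ℕ) :
    ∑ S ∈ s.powerset, (-1) ^ #S * (∑ i ∈ S, a i) ^ M =
      ∑ g ∈ piAntidiag s M, multinomial s g * ∏ i ∈ s, (0 ^ g i - a i ^ g i) := by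
  have expand : ∀ S ∈ s.powerset, (∑ i ∈ S, a i) ^ M =
      ∑ g ∈ piAntidiag s M, multinomial s g * ∏ i ∈ s, (if i ∈ S then a i else 0) ^ g i := by
    intro S hS
    rw [← sum_pow_eq_sum_piAntidiag, sum_ite_mem, inter_eq_right.2 (mem_powerset.1 hS)]
  simp_rw [sum_congr rfl fun S hS => congrArg _ (expand S hS), mul_sum, mul_left_comm _ (_ : R)]
  rw [sum_comm]
  simp_rw [← mul_sum, sum_powerset_neg_one_pow_card_mul_prod_ite_pow]

theorem sum_powerset_neg_one_pow_card_mul_sum_pow_of_lt (s : Finset ι) (a : ι → R) {M : ℕ}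
    (hM : M < #s) : ∑ S ∈ s.powerset, (-1) ^ #S * (∑ i ∈ S, a i) ^ M = 0 := by
  rw [sum_powerset_neg_one_pow_card_mul_sum_pow]
  refine sum_eq_zero fun g hg => ?_
  obtain ⟨i, hi, hgi⟩ : ∃ i ∈ s, g i = 0 := by
    by_contra! hpos
    have := card_nsmul_le_sum s g 1 fun i hi => Nat.one_le_iff_ne_zero.2 (hpos i hi)
    rw [(mem_piAntidiag.1 hg).1, smul_eq_mul, mul_one] at this
    omega
  exact mul_eq_zero_of_right _ (prod_eq_zero hi (by simp [hgi]))

theorem sum_powerset_neg_one_pow_card_mul_shiftedMoment {K : Type*} [Field K] [CharZero K]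
    {s : Finset ι} {N : ℕ} (hs : #s = N + 1) (a : ι → K) (m : ℕ) (A : K) :
    ∑ S ∈ s.powerset, (-1) ^ #S * shiftedMoment N m A (∑ i ∈ S, a i) =
      (-1) ^ (N + 1) * (N ! * m ! / (N + m + 1)!) *
        ∑ S ∈ s.powerset, (-1) ^ #S * (∑ i ∈ S, a i) ^ (N + m + 1) := by
  have hlow : ∀ k ∈ range (N + 1), ∀ c : K,
      ∑ S ∈ s.powerset, (-1) ^ #S * (c * (∑ i ∈ S, a i) ^ (N - k)) = 0 := fun k _ c => by
    simp_rw [mul_left_comm _ c, ← mul_sum,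
      sum_powerset_neg_one_pow_card_mul_sum_pow_of_lt s a (show N - k < #s by omega), mul_zero]
  simp_rw [shiftedMoment_eq, mul_add, sum_add_distrib, mul_sum (range _)]
  rw [sum_comm, sum_eq_zero fun k hk => hlow k hk _, zero_add, mul_sum]
  exact sum_congr rfl fun S _ => by ring

end AlternatingSubsetSums

theorem sum_powerset_neg_one_pow_card_mul_eq_add_sum_Icc {ι R : Type*} [CommRing R]
    (s : Finset ι) (F : Finset ι → R) :
    ∑ S ∈ s.powerset, (-1) ^ #S * F S =
      F ∅ + ∑ i ∈ Icc 1 #s, (-1) ^ i * ∑ S ∈ powersetCard i s, F S := by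
  rw [sum_powerset, sum_range_succ', powersetCard_zero, sum_singleton, card_empty, pow_zero,
    one_mul, add_comm, ← Ico_add_one_right_eq_Icc, sum_Ico_eq_sum_range, add_tsub_cancel_right]
  refine congrArg _ (sum_congr rfl fun i _ => ?_)
  rw [mul_sum, add_comm 1 i]
  exact sum_congr rfl fun S hS => by rw [(mem_powersetCard.1 hS).2]

theorem Nat.multinomial_add_one {ι : Type*} (s : Finset ι) (f : ι → ℕ) :
    multinomial s (f + 1) * (∏ i ∈ s, (f i + 1)) * (∑ i ∈ s, f i)! =
      multinomial s f * (∑ i ∈ s, f i + #s)! := by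
  have h := multinomial_spec s (f + 1)
  simp only [Pi.add_apply, Pi.one_apply, factorial_succ, prod_mul_distrib, sum_add_distrib,
    sum_const, smul_eq_mul, mul_one] at h
  rw [← multinomial_spec s f, ← h]
  ring

theorem sum_powerset_neg_one_pow_card_mul_sum_pow_add {K : Type*} [Field K] [CharZero K] {n : ℕ}
    (a : Fin n → K) (m : ℕ) :
    ∑ S ∈ univ.powerset, (-1) ^ #S * (∑ i ∈ S, a i) ^ (m + n) =
      (-1) ^ n * ((m + n)! / m !) * (∏ i, a i) *
        ∑ f ∈ Nat.antidiagonalTuple n m, multinomial univ f * ∏ i, a i ^ f i / (f i + 1) := by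
  rw [sum_powerset_neg_one_pow_card_mul_sum_pow, piAntidiag_univ_fin_eq_antidiagonalTuple, mul_sum]
  symm
  refine sum_of_injOn (· + 1) (add_left_injective 1).injOn ?_ ?_ ?_
  · intro f hf
    simp_all [Nat.mem_antidiagonalTuple, sum_add_distrib]
  · intro g hg hgim
    obtain ⟨i, hi⟩ : ∃ i, g i = 0 := by
      by_contra! hpos
      refine hgim ⟨g - 1, ?_, ?_⟩
      · rw [Nat.mem_antidiagonalTuple] at hg
        rw [mem_coe, Nat.mem_antidiagonalTuple]
        simp only [Pi.sub_apply, Pi.one_apply]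
        rw [sum_tsub_distrib _ fun i _ => Nat.one_le_iff_ne_zero.2 (hpos i), hg]
        simp
      · funext i
        simp only [Pi.add_apply, Pi.sub_apply, Pi.one_apply]
        have := hpos i
        omega
    exact mul_eq_zero_of_right _ (prod_eq_zero (mem_univ i) (by simp [hi]))
  · intro f hf
    have key := congrArg (Nat.cast : ℕ → K) (multinomial_add_one univ f)
    rw [Nat.mem_antidiagonalTuple.1 hf, Finset.card_fin] at key
    push_cast at key
    simp only [Pi.add_apply, Pi.one_apply]
    simp only [zero_pow (Nat.add_one_ne_zero _), zero_sub, prod_neg, Finset.card_fin]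
    simp only [pow_succ, prod_mul_distrib, prod_div_distrib]
    have h₁ : (m ! : K) ≠ 0 := mod_cast factorial_ne_zero _
    have h₂ : ∏ i, ((f i : K) + 1) ≠ 0 := prod_ne_zero_iff.2 fun i _ => Nat.cast_add_one_ne_zero _
    field_simp
    linear_combination (-(∏ i, a i) * ∏ i, a i ^ f i) * key

theorem uniform_general_moment_identity_general
    (m n : ℕ) (hn : 2 ≤ n) (a : Fin n → ℝ) (ha : ∀ i, 0 < a i)
    (A : ℝ) :
    (1 / (((n - 1).factorial : ℝ) * ∏ i : Fin n, a i)) *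
        (A ^ (m + n) / (m + n) +
          ∑ i ∈ Finset.Icc 1 n, (-1 : ℝ) ^ i *
            ∑ S ∈ Finset.powersetCard i (Finset.univ : Finset (Fin n)),
              ∑ k ∈ Finset.range n, ((n - 1).choose k : ℝ) *
                (-(∑ l ∈ S, a l)) ^ (n - 1 - k) *
                  ((A ^ (k + m + 1) - (∑ l ∈ S, a l) ^ (k + m + 1)) / (k + m + 1))) =
      ∑ f ∈ Finset.Nat.antidiagonalTuple n m,
        (Nat.multinomial Finset.univ f : ℝ) *
          ∏ k : Fin n, a k ^ f k / (f k + 1) := by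
  obtain ⟨N, rfl⟩ : ∃ N, n = N + 1 := ⟨n - 1, by omega⟩
  simp only [Nat.add_sub_cancel, ← shiftedMoment.eq_1]
  have hbracket : A ^ (m + (N + 1)) / (m + (N + 1 : ℕ)) +
      ∑ i ∈ Icc 1 (N + 1), (-1 : ℝ) ^ i *
        ∑ S ∈ powersetCard i univ, shiftedMoment N m A (∑ l ∈ S, a l) =
      ∑ S ∈ univ.powerset, (-1) ^ #S * shiftedMoment N m A (∑ l ∈ S, a l) := by
    rw [sum_powerset_neg_one_pow_card_mul_eq_add_sum_Icc, sum_empty, shiftedMoment_zero,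
      Finset.card_fin]
    push_cast
    ring_nf
  rw [hbracket, sum_powerset_neg_one_pow_card_mul_shiftedMoment (Finset.card_fin _),
    show N + m + 1 = m + (N + 1) by ring, sum_powerset_neg_one_pow_card_mul_sum_pow_add]
  have hprod : ∏ i, a i ≠ 0 := prod_ne_zero_iff.2 fun i _ => (ha i).ne'
  have hsign : (-1 : ℝ) ^ (N + 1) * (-1) ^ (N + 1) = 1 := by rw [← mul_pow]; norm_num
  generalize (∑ f ∈ Nat.antidiagonalTuple _ m, _ : ℝ) = T
  field_simp
  linear_combination T * hsign

/-- For integers `m ≥ 1`, `n ≥ 2` and positive reals `a₁, …, aₙ` with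
`A = a₁ + ⋯ + aₙ`,
`(1/((n-1)! ∏ᵢ aᵢ)) (A^{m+n}/(m+n) + B(n))
  = ∑_{i₁+⋯+iₙ=m} (m!/(i₁!⋯iₙ!)) (a₁^{i₁}/(i₁+1)) ⋯ (aₙ^{iₙ}/(iₙ+1))`,
where `B(n) = ∑_{i=1}^{n} (-1)^i ∑_{1 ≤ j₁ < ⋯ < jᵢ ≤ n}
  ∑_{k=0}^{n-1} C(n-1,k) (-∑ₗ a_{jₗ})^{n-1-k}
    (A^{k+m+1} - (∑ₗ a_{jₗ})^{k+m+1})/(k+m+1)`. -/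
theorem uniform_general_moment_identity
    (m n : ℕ) (hm : 1 ≤ m) (hn : 2 ≤ n) (a : Fin n → ℝ) (ha : ∀ i, 0 < a i)
    (A : ℝ) (hA : A = ∑ i : Fin n, a i) :
    (1 / (((n - 1).factorial : ℝ) * ∏ i : Fin n, a i)) *
        (A ^ (m + n) / (m + n) +
          ∑ i ∈ Finset.Icc 1 n, (-1 : ℝ) ^ i *
            ∑ S ∈ Finset.powersetCard i (Finset.univ : Finset (Fin n)),
              ∑ k ∈ Finset.range n, ((n - 1).choose k : ℝ) *
                (-(∑ l ∈ S, a l)) ^ (n - 1 - k) *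
                  ((A ^ (k + m + 1) - (∑ l ∈ S, a l) ^ (k + m + 1)) / (k + m + 1))) =
      ∑ f ∈ Finset.Nat.antidiagonalTuple n m,
        (Nat.multinomial Finset.univ f : ℝ) *
          ∏ k : Fin n, a k ^ f k / (f k + 1) :=
  uniform_general_moment_identity_general m n hn a ha A
end

section
/- For all integers m ≥ 0, n ≥ 1, and every integer i with 0 ≤ i ≤ n, one has ∫_i^n (x − i)^{n−1} x^m dx = (m!(n−1)!/(m+n)!) ∑_{j=0}^{m} (−1)^j C(m+n, m−j) (n − i)^{n+j} n^{m−j}. -/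
/-!
Substituting `x ↦ n - x` turns the integral into `∫₀ᵃ (a - x)^(n-1) (n - x)^m dx` with `a = n - i`.
Expanding `(n - x)^m` binomially leaves Beta integrals
`∫₀ᵃ x^j (a - x)^k dx = j! k! / (j + k + 1)! · a^(j+k+1)`, obtained by integrating by parts in `k`.
-/

open Finset intervalIntegral
open scoped Nat

theorem integral_pow_mul_sub_pow_succ (a : ℝ) (j k : ℕ) :
    (j + 1 : ℝ) * ∫ x in (0 : ℝ)..a, x ^ j * (a - x) ^ (k + 1) =
      (k + 1 : ℝ) * ∫ x in (0 : ℝ)..a, x ^ (j + 1) * (a - x) ^ k := by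
  have hu : ∀ x ∈ Set.uIcc 0 a,
      HasDerivAt (fun x : ℝ ↦ (a - x) ^ (k + 1)) (-((k + 1 : ℝ) * (a - x) ^ k)) x := by
    intro x _
    simpa using ((hasDerivAt_id x).const_sub a).fun_pow (k + 1)
  have hv : ∀ x ∈ Set.uIcc 0 a,
      HasDerivAt (fun x : ℝ ↦ x ^ (j + 1)) ((j + 1 : ℝ) * x ^ j) x := by
    intro x _
    simpa using hasDerivAt_pow (j + 1) x
  have parts := integral_mul_deriv_eq_deriv_mul hu hv
    (by apply Continuous.intervalIntegrable; fun_prop)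
    (by apply Continuous.intervalIntegrable; fun_prop)
  simp only [sub_self, zero_pow (Nat.succ_ne_zero _), zero_mul, mul_zero, sub_zero, zero_sub,
    neg_mul, integral_neg, neg_neg] at parts
  rw [← integral_const_mul, ← integral_const_mul]
  exact (integral_congr fun x _ ↦ by ring).trans (parts.trans (integral_congr fun x _ ↦ by ring))

theorem integral_pow_mul_sub_pow (a : ℝ) (j k : ℕ) :
    ∫ x in (0 : ℝ)..a, x ^ j * (a - x) ^ k =
      j ! * k ! / (j + k + 1)! * a ^ (j + k + 1) := by
  induction k generalizing j with
  | zero =>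
    simp only [pow_zero, mul_one, integral_pow, add_zero, Nat.factorial_zero, Nat.factorial_succ]
    push_cast
    field_simp
    ring
  | succ k ih =>
    have hj : (j + 1 : ℝ) ≠ 0 := by positivity
    rw [← mul_right_inj' hj, integral_pow_mul_sub_pow_succ, ih,
      show j + 1 + k + 1 = j + (k + 1) + 1 by ring, Nat.factorial_succ j, Nat.factorial_succ k]
    push_cast
    field_simp

theorem choose_mul_factorial_div_factorial {m j : ℕ} (hj : j ≤ m) (k : ℕ) :
    (m.choose j : ℝ) * (j ! * k ! / (j + k + 1)!) =
      m ! * k ! / (m + k + 1)! * (m + k + 1).choose (m - j) := by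
  have hm : (m ! : ℝ) = m.choose j * j ! * (m - j)! := by
    rw [← Nat.choose_mul_factorial_mul_factorial hj]; push_cast; ring
  have hmk : ((m + k + 1)! : ℝ) = (m + k + 1).choose (m - j) * (m - j)! * (j + k + 1)! := by
    rw [← Nat.choose_mul_factorial_mul_factorial (by omega : m - j ≤ m + k + 1),
      show m + k + 1 - (m - j) = j + k + 1 by omega]
    push_cast; ring
  have hc : ((m + k + 1).choose (m - j) : ℝ) ≠ 0 := by
    exact_mod_cast (Nat.choose_pos (by omega)).ne'
  rw [hm, hmk]
  field_simp

theorem integral_sub_pow_mul_pow (a b : ℝ) (k m : ℕ) :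
    ∫ x in (b - a)..b, (x - (b - a)) ^ k * x ^ m =
      m ! * k ! / (m + k + 1)! * ∑ j ∈ range (m + 1),
        (-1) ^ j * ((m + k + 1).choose (m - j) : ℝ) * a ^ (k + 1 + j) * b ^ (m - j) := by
  have hbinom (x : ℝ) : (a - x) ^ k * (b - x) ^ m =
      ∑ j ∈ range (m + 1), (-1) ^ j * m.choose j * b ^ (m - j) * (x ^ j * (a - x) ^ k) := by
    rw [show b - x = -x + b by ring, add_pow, mul_sum]
    exact sum_congr rfl fun j _ ↦ by rw [neg_pow]; ring
  calc ∫ x in (b - a)..b, (x - (b - a)) ^ k * x ^ m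
      = ∫ x in (0 : ℝ)..a, (a - x) ^ k * (b - x) ^ m := by
        have h := integral_comp_sub_left (fun x ↦ (x - (b - a)) ^ k * x ^ m) b (a := 0) (b := a)
        simp only [sub_zero, sub_sub_sub_cancel_left] at h
        exact h.symm
    _ = ∑ j ∈ range (m + 1), (-1) ^ j * m.choose j * b ^ (m - j) *
          ∫ x in (0 : ℝ)..a, x ^ j * (a - x) ^ k := by
        simp only [hbinom, ← integral_const_mul]
        exact integral_finsetSum fun j _ ↦ by
          apply Continuous.intervalIntegrable; fun_prop
    _ = _ := by
        rw [mul_sum]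
        refine sum_congr rfl fun j hj ↦ ?_
        rw [integral_pow_mul_sub_pow]
        linear_combination (-1) ^ j * b ^ (m - j) * a ^ (k + 1 + j) *
          choose_mul_factorial_div_factorial (Nat.lt_succ_iff.mp (mem_range.mp hj)) k

theorem integral_pow_shift_eq_sum_general (m n i : ℕ) (hn : 1 ≤ n) :
    ∫ x in (i : ℝ)..(n : ℝ), (x - i) ^ (n - 1) * x ^ m =
      ((m.factorial : ℝ) * ((n - 1).factorial : ℝ) / ((m + n).factorial : ℝ)) *
        ∑ j ∈ Finset.range (m + 1),
          (-1 : ℝ) ^ j * ((m + n).choose (m - j) : ℝ) *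
            ((n : ℝ) - (i : ℝ)) ^ (n + j) * (n : ℝ) ^ (m - j) := by
  obtain ⟨k, rfl⟩ : ∃ k, n = k + 1 := ⟨n - 1, by omega⟩
  simpa only [sub_sub_cancel, Nat.add_sub_cancel, ← add_assoc]
    using integral_sub_pow_mul_pow ((k + 1 : ℕ) - i) (k + 1 : ℕ) k m

/-- For integers `m ≥ 0`, `n ≥ 1` and `0 ≤ i ≤ n`,
`∫_i^n (x-i)^{n-1} x^m dx
  = (m!(n-1)!/(m+n)!) ∑_{j=0}^{m} (-1)^j C(m+n, m-j) (n-i)^{n+j} n^{m-j}`. -/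
theorem integral_pow_shift_eq_sum (m n i : ℕ) (hn : 1 ≤ n) (hi : i ≤ n) :
    ∫ x in (i : ℝ)..(n : ℝ), (x - i) ^ (n - 1) * x ^ m =
      ((m.factorial : ℝ) * ((n - 1).factorial : ℝ) / ((m + n).factorial : ℝ)) *
        ∑ j ∈ Finset.range (m + 1),
          (-1 : ℝ) ^ j * ((m + n).choose (m - j) : ℝ) *
            ((n : ℝ) - (i : ℝ)) ^ (n + j) * (n : ℝ) ^ (m - j) :=
  integral_pow_shift_eq_sum_general m n i hn
end

section
/- Let n ≥ 1, m ≥ 0 be integers and let X_1, …, X_n be independent identically distributed random variables, each uniformly distributed on [0, 1]. Then the m-th moment of S_n = X_1 + ⋯ + X_n is E[S_n^m] = S(m+n, n) · m! · n!/(m+n)!, where S(m+n, n) is the Stirling number of the second kind. -/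
open Finset MeasureTheory ProbabilityTheory

/-- The Stirling number of the second kind `S(N, k)`: the number of partitions
of an `N`-element set into `k` nonempty blocks, given by the standard
recurrence `S(0,0) = 1`, `S(0,k+1) = 0`, `S(N+1,0) = 0`,
`S(N+1,k+1) = (k+1) S(N,k+1) + S(N,k)`. -/
def stirlingSecond : ℕ → ℕ → ℕ
  | 0, 0 => 1
  | 0, _ + 1 => 0
  | _ + 1, 0 => 0
  | N + 1, k + 1 => (k + 1) * stirlingSecond N (k + 1) + stirlingSecond N k

/-! If `Q' = P`, then `∫₀¹ P (s + t) dt = Q (s + 1) - Q s = Δ Q s`, and the forward difference `Δ`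
commutes with differentiation. Integrating out one coordinate at a time therefore gives
`E[(s + Sₙ)^m] = m! · Δⁿ[x^(m+n) / (m+n)!](s)`. At `s = 0`, the Leibniz rule
`Δⁿ⁺¹(x g)(0) = (n + 1) Δⁿ g(1) = (n + 1) (Δⁿ g(0) + Δⁿ⁺¹ g(0))` shows that `Δⁿ[x^N](0) / n!`
satisfies the recurrence of `S(N, n)`. -/

open fwdDiff

section FwdDiff

lemma fwdDiff_iter_apply_add_step {M G : Type*} [AddCommMonoid M] [AddCommGroup G] (h : M)
    (f : M → G) (n : ℕ) (y : M) :
    Δ_[h] ^[n] f (y + h) = Δ_[h] ^[n] f y + Δ_[h] ^[n + 1] f y := by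
  rw [Function.iterate_succ_apply', fwdDiff, add_sub_cancel]

variable {R : Type*} [CommRing R]

lemma fwdDiff_iter_succ_id_mul (f : R → R) (n : ℕ) (x : R) :
    Δ_[1] ^[n + 1] (fun y ↦ y * f y) x =
      x * Δ_[1] ^[n + 1] f x + (n + 1) * Δ_[1] ^[n] f (x + 1) := by
  induction n generalizing x with
  | zero =>
    rw [zero_add, Function.iterate_one, Function.iterate_zero, id, fwdDiff, fwdDiff]
    push_cast
    ring
  | succ n ih =>
    rw [Function.iterate_succ_apply', fwdDiff, ih, ih]
    push_cast
    linear_combination x * fwdDiff_iter_apply_add_step 1 f (n + 1) x +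
      (n + 1) * fwdDiff_iter_apply_add_step 1 f n (x + 1)

lemma fwdDiff_iter_pow_zero_eq_stirlingSecond (N n : ℕ) :
    Δ_[1] ^[n] (fun x : R ↦ x ^ N) 0 = n.factorial * stirlingSecond N n := by
  induction N generalizing n with
  | zero =>
    cases n with
    | zero => simp [stirlingSecond]
    | succ n =>
      simp only [pow_zero, Function.iterate_succ_apply, fwdDiff_const]
      simp [stirlingSecond, Function.iterate_fixed (fwdDiff_const (1 : R) (0 : R))]
  | succ N ih =>
    cases n with
    | zero => simp [stirlingSecond]
    | succ n =>
      simp only [pow_succ']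
      rw [fwdDiff_iter_succ_id_mul, fwdDiff_iter_apply_add_step 1 _ n 0, ih, ih, zero_mul,
        zero_add, stirlingSecond, Nat.factorial_succ]
      push_cast
      ring

end FwdDiff

lemma HasDerivAt.fwdDiff_iter {P Q : ℝ → ℝ} (hQ : ∀ x, HasDerivAt Q (P x) x) (n : ℕ) (x : ℝ) :
    HasDerivAt (Δ_[1] ^[n] Q) (Δ_[1] ^[n] P x) x := by
  induction n generalizing P Q with
  | zero => exact hQ x
  | succ n ih =>
    simp only [Function.iterate_succ_apply]
    exact ih fun y ↦ ((hQ (y + 1)).comp_add_const y 1).sub (hQ y)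

lemma Continuous.fwdDiff_iter {P : ℝ → ℝ} (hP : Continuous P) (n : ℕ) :
    Continuous (Δ_[1] ^[n] P) := by
  induction n generalizing P with
  | zero => exact hP
  | succ n ih =>
    rw [Function.iterate_succ_apply]
    exact ih ((hP.comp (continuous_add_const 1)).sub hP)

lemma integral_Icc_fwdDiff_iter_add {P Q : ℝ → ℝ} (hQ : ∀ x, HasDerivAt Q (P x) x)
    (hP : Continuous P) (n : ℕ) (s : ℝ) :
    ∫ t in Set.Icc (0 : ℝ) 1, Δ_[1] ^[n] P (s + t) = Δ_[1] ^[n + 1] Q s := by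
  rw [integral_Icc_eq_integral_Ioc, ← intervalIntegral.integral_of_le zero_le_one,
    intervalIntegral.integral_comp_add_left (Δ_[1] ^[n] P),
    intervalIntegral.integral_eq_sub_of_hasDerivAt (fun x _ ↦ HasDerivAt.fwdDiff_iter hQ n x)
      ((hP.fwdDiff_iter n).intervalIntegrable _ _),
    Function.iterate_succ_apply', fwdDiff, add_zero]

lemma hasDerivAt_pow_succ_div_factorial (k : ℕ) (x : ℝ) :
    HasDerivAt (fun y : ℝ ↦ y ^ (k + 1) / (k + 1).factorial) (x ^ k / k.factorial) x := by
  refine ((hasDerivAt_pow (k + 1) x).div_const _).congr_deriv ?_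
  rw [Nat.factorial_succ, add_tsub_cancel_right]
  push_cast
  field_simp

lemma Continuous.integrable_pi_restrict_isCompact {ι E : Type*} [Fintype ι]
    [NormedAddCommGroup E] {f : (ι → ℝ) → E} (hf : Continuous f) {s : ι → Set ℝ}
    (hs : ∀ i, IsCompact (s i)) :
    Integrable f (Measure.pi fun i ↦ volume.restrict (s i)) := by
  rw [← Measure.restrict_pi_pi]
  exact hf.continuousOn.integrableOn_compact (isCompact_univ_pi hs)

lemma integral_pi_fin_succ_eq_integral_cons {α E : Type*} [MeasurableSpace α]
    [NormedAddCommGroup E] [NormedSpace ℝ E] (μ : Measure α) [SigmaFinite μ] {n : ℕ}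
    {f : (Fin (n + 1) → α) → E} (hf : Integrable f (Measure.pi fun _ ↦ μ)) :
    ∫ x, f x ∂(Measure.pi fun _ ↦ μ) = ∫ a, ∫ x, f (Fin.cons a x) ∂(Measure.pi fun _ ↦ μ) ∂μ := by
  have he := (measurePreserving_piFinSuccAbove (fun _ : Fin (n + 1) ↦ μ) 0).symm
  rw [← he.integral_comp', integral_prod]
  · simp [MeasurableEquiv.piFinSuccAbove_symm_apply, Fin.insertNthEquiv]
  · rwa [← he.integrable_comp_emb (MeasurableEquiv.measurableEmbedding _)] at hf

instance isProbabilityMeasure_restrict_Icc_zero_one :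
    IsProbabilityMeasure (volume.restrict (Set.Icc (0 : ℝ) 1)) :=
  ⟨by simp⟩

lemma integral_add_sum_pow_pi_Icc (m n : ℕ) (s : ℝ) :
    ∫ z, (s + ∑ i, z i) ^ m ∂(Measure.pi fun _ : Fin n ↦ volume.restrict (Set.Icc (0 : ℝ) 1)) =
      m.factorial * Δ_[1] ^[n] (fun x : ℝ ↦ x ^ (m + n) / (m + n).factorial) s := by
  induction n generalizing s with
  | zero =>
    simp
    field_simp
  | succ n ih =>
    rw [integral_pi_fin_succ_eq_integral_cons _
      ((by fun_prop : Continuous _).integrable_pi_restrict_isCompact fun _ ↦ isCompact_Icc)]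
    simp only [Fin.sum_cons, ← add_assoc, ih, integral_const_mul]
    rw [integral_Icc_fwdDiff_iter_add (hasDerivAt_pow_succ_div_factorial _) (by fun_prop)]

lemma withDensity_ofReal_ite_mem {α : Type*} [MeasurableSpace α] (μ : Measure α) {s : Set α}
    [DecidablePred (· ∈ s)] (hs : MeasurableSet s) :
    μ.withDensity (fun x ↦ ENNReal.ofReal (if x ∈ s then 1 else 0)) = μ.restrict s := by
  rw [← withDensity_indicator_one hs]
  congr with x
  by_cases hx : x ∈ s <;> simp [hx]

theorem moment_sum_iid_uniform_eq_stirling_general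
    {Ω : Type*} [MeasurableSpace Ω] (μ : Measure Ω) [IsProbabilityMeasure μ]
    (n m : ℕ)
    (X : Fin n → Ω → ℝ) (hmeas : ∀ i, Measurable (X i))
    (hindep : iIndepFun X μ)
    (hlaw : ∀ i, Measure.map (X i) μ =
      volume.withDensity fun x =>
        ENNReal.ofReal (if x ∈ Set.Icc (0 : ℝ) 1 then 1 else 0)) :
    ∫ ω, (∑ i : Fin n, X i ω) ^ m ∂μ =
      (stirlingSecond (m + n) n : ℝ) * (m.factorial : ℝ) * (n.factorial : ℝ) /
        ((m + n).factorial : ℝ) := by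
  have hjoint : μ.map (fun ω i ↦ X i ω) =
      Measure.pi fun _ ↦ volume.restrict (Set.Icc (0 : ℝ) 1) := by
    rw [(iIndepFun_iff_map_fun_eq_pi_map fun i ↦ (hmeas i).aemeasurable).mp hindep]
    simp_rw [hlaw, withDensity_ofReal_ite_mem _ measurableSet_Icc]
  have hscale : (fun x : ℝ ↦ x ^ (m + n) / (m + n).factorial) =
      ((m + n).factorial : ℝ)⁻¹ • fun x ↦ x ^ (m + n) := by
    ext x
    simp [div_eq_inv_mul]
  calc ∫ ω, (∑ i, X i ω) ^ m ∂μ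
      = ∫ z, (0 + ∑ i, z i) ^ m ∂(μ.map fun ω i ↦ X i ω) := by
        rw [integral_map (measurable_pi_lambda _ hmeas).aemeasurable (by fun_prop)]
        simp
    _ = m.factorial * Δ_[1] ^[n] (fun x : ℝ ↦ x ^ (m + n) / (m + n).factorial) 0 := by
        rw [hjoint, integral_add_sum_pow_pi_Icc]
    _ = _ := by
        rw [hscale, fwdDiff_iter_const_smul, Pi.smul_apply, fwdDiff_iter_pow_zero_eq_stirlingSecond,
          smul_eq_mul]
        field_simp

/-- If `X₁, …, Xₙ` (`n ≥ 1`) are i.i.d. uniform random variables on `[0, 1]`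
(density `1` on `[0, 1]` and `0` elsewhere), then for every integer `m ≥ 0`
the `m`-th moment of `Sₙ = X₁ + ⋯ + Xₙ` is
`E[Sₙ^m] = S(m+n, n) · m! · n! / (m+n)!`,
where `S` is the Stirling number of the second kind. -/
theorem moment_sum_iid_uniform_eq_stirling
    {Ω : Type*} [MeasurableSpace Ω] (μ : Measure Ω) [IsProbabilityMeasure μ]
    (n m : ℕ) (hn : 1 ≤ n)
    (X : Fin n → Ω → ℝ) (hmeas : ∀ i, Measurable (X i))
    (hindep : iIndepFun X μ)
    (hlaw : ∀ i, Measure.map (X i) μ =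
      volume.withDensity fun x =>
        ENNReal.ofReal (if x ∈ Set.Icc (0 : ℝ) 1 then 1 else 0)) :
    ∫ ω, (∑ i : Fin n, X i ω) ^ m ∂μ =
      (stirlingSecond (m + n) n : ℝ) * (m.factorial : ℝ) * (n.factorial : ℝ) /
        ((m + n).factorial : ℝ) :=
  moment_sum_iid_uniform_eq_stirling_general μ n m X hmeas hindep hlaw
end
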